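/- arXiv:2501.17488 — 6 statements merged into one kernel-verified Lean document; each statement's English description precedes it below -/
import Mathlib

section
/- Under the LEN setup, assume F' is L-Lipschitz and M ≥ 4mL. Then for every integer T ≥ 1 and every point z ∈ E: Σ_{t=0}^{T−1} η_t ⟨F(z_{t+1/2}), z_{t+1/2} − z⟩ ≤ (1/2)‖z_0 − z‖² − (1/2)‖z_T − z‖² − (1/8) Σ_{t=0}^{T−1} ‖z_t − z_{t+1/2}‖² − (1/16) Σ_{t=0}^{T−1} ‖z_t − z_{t+1}‖². -/
open scoped RealInnerProductSpace
open Set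

/-- Quadratic Taylor-type bound for a vector field with Lipschitz derivative,
anchored at a possibly different base point `p`. -/
lemma len_taylor {E : Type*} [NormedAddCommGroup E] [NormedSpace ℝ E]
    (F : E → E) (F' : E → E →L[ℝ] E) (L : ℝ)
    (hdiff : ∀ x : E, HasFDerivAt F (F' x) x)
    (hLip : ∀ x y : E, ‖F' x - F' y‖ ≤ L * ‖x - y‖)
    (hL : 0 ≤ L) (p a b : E) :
    ‖F b - F a - F' p (b - a)‖ ≤ L * ‖b - a‖ * (‖b - a‖ / 2 + ‖a - p‖) := by
  set v := b - a with hv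
  set A := F' p with hA
  set D := ‖a - p‖ with hD
  set f : ℝ → E := fun s => F (a + s • v) - F a - s • (A v) with hf
  have hline : ∀ s : ℝ, HasDerivAt (fun s : ℝ => a + s • v) v s := fun s => by
    simpa using ((hasDerivAt_id s).smul_const v).const_add a
  have hfd : ∀ s : ℝ, HasDerivAt f ((F' (a + s • v) - A) v) s := by
    intro s
    have h1 : HasDerivAt (fun s : ℝ => F (a + s • v)) (F' (a + s • v) v) s :=
      (hdiff (a + s • v)).comp_hasDerivAt s (hline s)
    have h2 : HasDerivAt (fun s : ℝ => F a + s • (A v)) (A v) s := by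
      simpa using ((hasDerivAt_id s).smul_const (A v)).const_add (F a)
    have := h1.sub h2
    simpa [f, sub_sub, Pi.sub_def] using this
  set B : ℝ → ℝ := fun s => s ^ 2 * (L * ‖v‖ * ‖v‖ / 2) + s * (L * ‖v‖ * D) with hB
  have hBd : ∀ s : ℝ, HasDerivAt B (2 * s ^ 1 * (L * ‖v‖ * ‖v‖ / 2) + 1 * (L * ‖v‖ * D)) s := by
    intro s
    exact ((hasDerivAt_pow 2 s).mul_const _).add ((hasDerivAt_id s).mul_const _)
  have bound : ∀ s ∈ Ico (0:ℝ) 1, ‖(F' (a + s • v) - A) v‖ ≤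
      2 * s ^ 1 * (L * ‖v‖ * ‖v‖ / 2) + 1 * (L * ‖v‖ * D) := by
    intro s hs
    have hs0 : (0:ℝ) ≤ s := hs.1
    have h1 : ‖(F' (a + s • v) - A) v‖ ≤ ‖F' (a + s • v) - A‖ * ‖v‖ :=
      (F' (a + s • v) - A).le_opNorm v
    have h2 : ‖F' (a + s • v) - A‖ ≤ L * ‖a + s • v - p‖ := hLip _ _
    have h3 : ‖a + s • v - p‖ ≤ D + s * ‖v‖ := by
      have : a + s • v - p = (a - p) + s • v := by abel
      rw [this]
      refine (norm_add_le _ _).trans ?_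
      rw [norm_smul, Real.norm_of_nonneg hs0]
    have hv0 : (0:ℝ) ≤ ‖v‖ := norm_nonneg _
    nlinarith [norm_nonneg (a + s • v - p), mul_le_mul_of_nonneg_right h2 hv0,
      mul_le_mul_of_nonneg_left h3 (mul_nonneg hL hv0)]
  have key := image_norm_le_of_norm_deriv_right_le_deriv_boundary
    (f := f) (f' := fun s => (F' (a + s • v) - A) v) (a := 0) (b := 1)
    (fun s _ => (hfd s).continuousAt.continuousWithinAt)
    (fun s _ => (hfd s).hasDerivWithinAt)
    (by simp [f, B]) hBd bound (right_mem_Icc.mpr zero_le_one)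
  have hf1 : f 1 = F b - F a - A v := by simp [f, hv]
  have hB1 : B 1 = L * ‖v‖ * (‖v‖ / 2 + D) := by simp [B]; ring
  rw [hf1, hB1] at key
  exact key

lemma len_four_point {E : Type*} [NormedAddCommGroup E] [InnerProductSpace ℝ E]
    (u v p q : E) :
    ⟪u - v, p - q⟫ = 1/2 * ‖u - q‖ ^ 2 - 1/2 * ‖v - q‖ ^ 2
      + 1/2 * ‖v - p‖ ^ 2 - 1/2 * ‖u - p‖ ^ 2 := by
  have h : ∀ x y : E, ‖x - y‖ ^ 2 = ‖x‖ ^ 2 - 2 * ⟪x, y⟫ + ‖y‖ ^ 2 := by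
    intro x y
    rw [← real_inner_self_eq_norm_sq, ← real_inner_self_eq_norm_sq, ← real_inner_self_eq_norm_sq,
      inner_sub_left, inner_sub_right, inner_sub_right, real_inner_comm y x]
    ring
  simp only [h, inner_sub_left, inner_sub_right]
  ring

lemma len_telescope {E : Type*} [NormedAddCommGroup E] (z : ℕ → E) (k : ℕ) :
    ∀ t, k ≤ t → ‖z t - z k‖ ≤ ∑ s ∈ Finset.Ico k t, ‖z s - z (s + 1)‖ := by
  intro t ht
  induction t, ht using Nat.le_induction with
  | base => simp
  | succ n hn ih =>
      rw [Finset.sum_Ico_succ_top hn]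
      calc ‖z (n + 1) - z k‖ ≤ ‖z (n+1) - z n‖ + ‖z n - z k‖ :=
            norm_sub_le_norm_sub_add_norm_sub _ _ _
        _ ≤ ‖z n - z (n+1)‖ + ∑ s ∈ Finset.Ico k n, ‖z s - z (s + 1)‖ := by
            rw [norm_sub_rev]; exact add_le_add_right ih _
        _ = _ := by ring

lemma len_double_count (m T : ℕ) (hm : 1 ≤ m) (g : ℕ → ℝ) (hg : ∀ s, 0 ≤ g s) :
    ∑ t ∈ Finset.range T, ∑ s ∈ Finset.Ico (m * (t / m)) t, g s
      ≤ ((m : ℝ) - 1) * ∑ s ∈ Finset.range T, g s := by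
  have hstep : ∑ t ∈ Finset.range T, ∑ s ∈ Finset.Ico (m * (t / m)) t, g s
      = ∑ t ∈ Finset.range T, ∑ s ∈ Finset.range T,
          (if m * (t / m) ≤ s ∧ s < t then g s else 0) := by
    refine Finset.sum_congr rfl fun t ht => ?_
    rw [Finset.sum_ite, Finset.sum_const_zero, add_zero]
    refine Finset.sum_congr ?_ fun _ _ => rfl
    ext s
    simp only [Finset.mem_Ico, Finset.mem_filter, Finset.mem_range]
    constructor
    · intro hs
      exact ⟨hs.2.trans (Finset.mem_range.mp ht), hs.1, hs.2⟩
    · intro hs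
      exact hs.2
  rw [hstep, Finset.sum_comm]
  rw [Finset.mul_sum]
  refine Finset.sum_le_sum fun s hs => ?_
  rw [Finset.sum_ite, Finset.sum_const_zero, add_zero, Finset.sum_const, nsmul_eq_mul]
  have hsub : ((Finset.range T).filter fun t => m * (t / m) ≤ s ∧ s < t)
      ⊆ Finset.Ico (s + 1) (s + m) := by
    intro t ht
    simp only [Finset.mem_filter, Finset.mem_range] at ht
    obtain ⟨-, h1, h2⟩ := ht
    have hmod : t % m < m := Nat.mod_lt _ hm
    have hdm : m * (t / m) + t % m = t := Nat.div_add_mod t m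
    simp only [Finset.mem_Ico]
    omega
  have hcard : (((Finset.range T).filter fun t => m * (t / m) ≤ s ∧ s < t).card : ℝ)
      ≤ (m : ℝ) - 1 := by
    have h1 := Finset.card_le_card hsub
    rw [Nat.card_Ico] at h1
    have h2 : ((Finset.range T).filter fun t => m * (t / m) ≤ s ∧ s < t).card ≤ m - 1 := by omega
    calc (((Finset.range T).filter fun t => m * (t / m) ≤ s ∧ s < t).card : ℝ)
        ≤ ((m - 1 : ℕ) : ℝ) := Nat.cast_le.mpr h2
      _ = (m : ℝ) - 1 := by rw [Nat.cast_sub hm]; simp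
  exact mul_le_mul_of_nonneg_right hcard (hg s)

set_option maxHeartbeats 1600000 in
/-- Lemma 1 (LEN regret bound): under the LEN setup with `M ≥ 4 m L`, the weighted
regret is bounded by the telescoping distance terms. -/
theorem len_regret_bound
    {E : Type*} [NormedAddCommGroup E] [InnerProductSpace ℝ E] [FiniteDimensional ℝ E]
    (F : E → E) (F' : E → E →L[ℝ] E) (L M : ℝ) (m : ℕ) (hm : 1 ≤ m)
    (hdiff : ∀ x : E, HasFDerivAt F (F' x) x)
    (hLip : ∀ x y : E, ‖F' x - F' y‖ ≤ L * ‖x - y‖)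
    (hMpos : 0 < M) (hM : 4 * (m : ℝ) * L ≤ M)
    (z w : ℕ → E) (η : ℕ → ℝ)
    (hne : ∀ t, w t ≠ z t)
    (hnewton : ∀ t, F (z t) + F' (z (m * (t / m))) (w t - z t)
        + (M * ‖w t - z t‖) • (w t - z t) = 0)
    (hη : ∀ t, η t = 1 / (M * ‖z t - w t‖))
    (hupdate : ∀ t, z (t + 1) = z t - η t • F (w t))
    (T : ℕ) (hT : 1 ≤ T) (zz : E) :
    ∑ t ∈ Finset.range T, η t * ⟪F (w t), w t - zz⟫ ≤
      (1 / 2) * ‖z 0 - zz‖ ^ 2 - (1 / 2) * ‖z T - zz‖ ^ 2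
        - (1 / 8) * ∑ t ∈ Finset.range T, ‖z t - w t‖ ^ 2
        - (1 / 16) * ∑ t ∈ Finset.range T, ‖z t - z (t + 1)‖ ^ 2 := by
  have hr : ∀ t, 0 < ‖z t - w t‖ := fun t =>
    norm_pos_iff.mpr (sub_ne_zero_of_ne (hne t).symm)
  have hηpos : ∀ t, 0 < η t := fun t => by
    rw [hη t]; exact div_pos one_pos (mul_pos hMpos (hr t))
  have hηe : ∀ t, η t * (M * ‖z t - w t‖) = 1 := fun t => by
    rw [hη t, one_div, inv_mul_cancel₀ (ne_of_gt (mul_pos hMpos (hr t)))]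
  have hL : 0 ≤ L := by
    have h := hLip (z 0) (w 0)
    have h0 := norm_nonneg (F' (z 0) - F' (w 0))
    nlinarith [hr 0]
  -- the residual of the lazy Newton step
  set δf : ℕ → E := fun t => F (w t) - F (z t) - F' (z (m * (t / m))) (w t - z t) with hδf
  have key1 : ∀ t, η t • F (w t) = η t • δf t + (z t - w t) := by
    intro t
    have hn := hnewton t
    have hFw : F (w t) = δf t - (M * ‖w t - z t‖) • (w t - z t) := by
      have h2 : δf t - (M * ‖w t - z t‖) • (w t - z t)
          = F (w t) - (F (z t) + F' (z (m * (t / m))) (w t - z t)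
              + (M * ‖w t - z t‖) • (w t - z t)) := by
        simp only [hδf]; abel
      rw [h2, hn, sub_zero]
    have hee : η t * (M * ‖w t - z t‖) = 1 := by rw [norm_sub_rev]; exact hηe t
    calc η t • F (w t) = η t • δf t - (η t * (M * ‖w t - z t‖)) • (w t - z t) := by
          rw [hFw, smul_sub, smul_smul]
      _ = η t • δf t + (z t - w t) := by rw [hee, one_smul]; abel
  have key3 : ∀ t, z (t + 1) - w t = -(η t • δf t) := by
    intro t
    have h : z (t + 1) - w t = z t - (η t • δf t + (z t - w t)) - w t := by
      rw [hupdate t, key1 t]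
    rw [h]; abel
  -- per-step identity
  have step : ∀ t, η t * ⟪F (w t), w t - zz⟫
      = (1/2 * ‖z t - zz‖ ^ 2 - 1/2 * ‖z (t+1) - zz‖ ^ 2)
        + (1/2 * ‖z (t+1) - w t‖ ^ 2 - 1/2 * ‖z t - w t‖ ^ 2) := by
    intro t
    have h0 : z t - z (t + 1) = η t • F (w t) := by rw [hupdate t]; abel
    have h1 : η t * ⟪F (w t), w t - zz⟫ = ⟪z t - z (t+1), w t - zz⟫ := by
      rw [h0, real_inner_smul_left]
    rw [h1, len_four_point]
    ring
  have sum_eq : ∑ t ∈ Finset.range T, η t * ⟪F (w t), w t - zz⟫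
      = (1/2 * ‖z 0 - zz‖ ^ 2 - 1/2 * ‖z T - zz‖ ^ 2)
        + ∑ t ∈ Finset.range T,
            (1/2 * ‖z (t+1) - w t‖ ^ 2 - 1/2 * ‖z t - w t‖ ^ 2) := by
    rw [Finset.sum_congr rfl fun t _ => step t, Finset.sum_add_distrib]
    congr 1
    exact Finset.sum_range_sub' (fun t => 1/2 * ‖z t - zz‖ ^ 2) T
  -- bound on the half-step correction
  set cm : ℝ := 1 / (4 * (m : ℝ)) with hcm
  have hm1 : (1:ℝ) ≤ (m:ℝ) := by exact_mod_cast hm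
  have hcm_pos : 0 < cm := by rw [hcm]; positivity
  have hcm_le : cm ≤ 1/4 := by
    rw [hcm, div_le_div_iff₀ (by positivity) (by norm_num)]
    nlinarith
  have hLM : L / M ≤ cm := by
    rw [hcm, div_le_div_iff₀ hMpos (by positivity)]
    nlinarith
  have haN : ∀ t, ‖z (t+1) - w t‖
      ≤ cm * (‖z t - w t‖ / 2 + ‖z t - z (m * (t / m))‖) := by
    intro t
    have heq : ‖z (t+1) - w t‖ = η t * ‖δf t‖ := by
      rw [key3 t, norm_neg, norm_smul, Real.norm_of_nonneg (hηpos t).le]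
    have hδb : ‖δf t‖
        ≤ L * ‖z t - w t‖ * (‖z t - w t‖ / 2 + ‖z t - z (m * (t / m))‖) := by
      have h := len_taylor F F' L hdiff hLip hL (z (m * (t / m))) (z t) (w t)
      rw [norm_sub_rev (w t) (z t)] at h
      exact h
    have hX : (0:ℝ) ≤ ‖z t - w t‖ / 2 + ‖z t - z (m * (t / m))‖ := by positivity
    calc ‖z (t+1) - w t‖ = η t * ‖δf t‖ := heq
      _ ≤ η t * (L * ‖z t - w t‖ * (‖z t - w t‖ / 2 + ‖z t - z (m * (t / m))‖)) :=
          mul_le_mul_of_nonneg_left hδb (hηpos t).le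
      _ = L / M * (‖z t - w t‖ / 2 + ‖z t - z (m * (t / m))‖) := by
          have h1 : ‖z t - w t‖ ≠ 0 := (hr t).ne'
          have h2 : M ≠ 0 := hMpos.ne'
          rw [hη t]
          field_simp
      _ ≤ cm * (‖z t - w t‖ / 2 + ‖z t - z (m * (t / m))‖) :=
          mul_le_mul_of_nonneg_right hLM hX
  -- triangle bound for the full step
  have hρ : ∀ t, ‖z t - z (t+1)‖ ≤ ‖z t - w t‖ + ‖z (t+1) - w t‖ := by
    intro t
    calc ‖z t - z (t+1)‖ ≤ ‖z t - w t‖ + ‖w t - z (t+1)‖ :=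
          norm_sub_le_norm_sub_add_norm_sub _ _ _
      _ = ‖z t - w t‖ + ‖z (t+1) - w t‖ := by rw [norm_sub_rev (w t)]
  -- lazy-drift bound
  have hmle : ∀ t : ℕ, m * (t / m) ≤ t := by
    intro t
    have := Nat.div_add_mod t m
    omega
  have hD2 : ∀ t, ‖z t - z (m * (t / m))‖ ^ 2
      ≤ ((m:ℝ) - 1) * ∑ s ∈ Finset.Ico (m * (t / m)) t, ‖z s - z (s+1)‖ ^ 2 := by
    intro t
    have h1 : ‖z t - z (m * (t / m))‖ ≤ ∑ s ∈ Finset.Ico (m * (t / m)) t, ‖z s - z (s + 1)‖ :=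
      len_telescope z _ t (hmle t)
    have h2 : ‖z t - z (m * (t / m))‖ ^ 2
        ≤ (∑ s ∈ Finset.Ico (m * (t / m)) t, ‖z s - z (s + 1)‖) ^ 2 :=
      pow_le_pow_left₀ (norm_nonneg _) h1 2
    have h3 := sq_sum_le_card_mul_sum_sq
      (s := Finset.Ico (m * (t / m)) t) (f := fun s => ‖z s - z (s + 1)‖)
    have hcard : ((Finset.Ico (m * (t / m)) t).card : ℝ) ≤ (m:ℝ) - 1 := by
      rw [Nat.card_Ico]
      have hmod : t % m < m := Nat.mod_lt _ hm
      have hdm : m * (t / m) + t % m = t := Nat.div_add_mod t m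
      have : t - m * (t / m) ≤ m - 1 := by omega
      calc ((t - m * (t / m) : ℕ) : ℝ) ≤ ((m - 1 : ℕ) : ℝ) := Nat.cast_le.mpr this
        _ = (m : ℝ) - 1 := by rw [Nat.cast_sub hm]; simp
    have hsum0 : (0:ℝ) ≤ ∑ s ∈ Finset.Ico (m * (t / m)) t, ‖z s - z (s+1)‖ ^ 2 :=
      Finset.sum_nonneg fun s _ => sq_nonneg _
    calc ‖z t - z (m * (t / m))‖ ^ 2
        ≤ (∑ s ∈ Finset.Ico (m * (t / m)) t, ‖z s - z (s + 1)‖) ^ 2 := h2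
      _ ≤ ((Finset.Ico (m * (t / m)) t).card : ℝ)
            * ∑ s ∈ Finset.Ico (m * (t / m)) t, ‖z s - z (s+1)‖ ^ 2 := h3
      _ ≤ ((m:ℝ) - 1) * ∑ s ∈ Finset.Ico (m * (t / m)) t, ‖z s - z (s+1)‖ ^ 2 :=
          mul_le_mul_of_nonneg_right hcard hsum0
  -- sum-level quantities
  set R := ∑ t ∈ Finset.range T, ‖z t - w t‖ ^ 2 with hR
  set P := ∑ t ∈ Finset.range T, ‖z t - z (t + 1)‖ ^ 2 with hP
  set A := ∑ t ∈ Finset.range T, ‖z (t+1) - w t‖ ^ 2 with hA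
  set Ds := ∑ t ∈ Finset.range T, ‖z t - z (m * (t / m))‖ ^ 2 with hDs
  have hR0 : 0 ≤ R := Finset.sum_nonneg fun t _ => sq_nonneg _
  have hP0 : 0 ≤ P := Finset.sum_nonneg fun t _ => sq_nonneg _
  have hA0 : 0 ≤ A := Finset.sum_nonneg fun t _ => sq_nonneg _
  have hDsum : Ds ≤ ((m:ℝ) - 1) ^ 2 * P := by
    have hdc := len_double_count m T hm (fun s => ‖z s - z (s+1)‖ ^ 2) (fun s => sq_nonneg _)
    calc Ds ≤ ∑ t ∈ Finset.range T,
            ((m:ℝ) - 1) * ∑ s ∈ Finset.Ico (m * (t / m)) t, ‖z s - z (s+1)‖ ^ 2 :=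
          Finset.sum_le_sum fun t _ => hD2 t
      _ = ((m:ℝ) - 1) * ∑ t ∈ Finset.range T,
            ∑ s ∈ Finset.Ico (m * (t / m)) t, ‖z s - z (s+1)‖ ^ 2 := by
          rw [Finset.mul_sum]
      _ ≤ ((m:ℝ) - 1) * (((m:ℝ) - 1) * P) :=
          mul_le_mul_of_nonneg_left hdc (by linarith)
      _ = ((m:ℝ) - 1) ^ 2 * P := by ring
  have hPsum : P ≤ 2 * R + 2 * A := by
    have hpt : ∀ t ∈ Finset.range T, ‖z t - z (t + 1)‖ ^ 2
        ≤ 2 * ‖z t - w t‖ ^ 2 + 2 * ‖z (t+1) - w t‖ ^ 2 := by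
      intro t _
      nlinarith [hρ t, norm_nonneg (z t - z (t+1)), norm_nonneg (z t - w t),
        norm_nonneg (z (t+1) - w t), sq_nonneg (‖z t - w t‖ - ‖z (t+1) - w t‖)]
    calc P ≤ ∑ t ∈ Finset.range T,
          (2 * ‖z t - w t‖ ^ 2 + 2 * ‖z (t+1) - w t‖ ^ 2) := Finset.sum_le_sum hpt
      _ = 2 * R + 2 * A := by
          rw [Finset.sum_add_distrib, ← Finset.mul_sum, ← Finset.mul_sum]
  have hAsum : A ≤ cm ^ 2 / 2 * R + 2 * cm ^ 2 * Ds := by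
    have hpt : ∀ t ∈ Finset.range T, ‖z (t+1) - w t‖ ^ 2
        ≤ cm ^ 2 / 2 * ‖z t - w t‖ ^ 2 + 2 * cm ^ 2 * ‖z t - z (m * (t / m))‖ ^ 2 := by
      intro t _
      have h1 := haN t
      have h2 := norm_nonneg (z (t+1) - w t)
      have hq : (‖z t - w t‖ / 2 + ‖z t - z (m * (t / m))‖) ^ 2
          ≤ ‖z t - w t‖ ^ 2 / 2 + 2 * ‖z t - z (m * (t / m))‖ ^ 2 := by
        nlinarith [sq_nonneg (‖z t - w t‖ / 2 - ‖z t - z (m * (t / m))‖)]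
      calc ‖z (t+1) - w t‖ ^ 2
          ≤ (cm * (‖z t - w t‖ / 2 + ‖z t - z (m * (t / m))‖)) ^ 2 :=
            pow_le_pow_left₀ h2 h1 2
        _ = cm ^ 2 * (‖z t - w t‖ / 2 + ‖z t - z (m * (t / m))‖) ^ 2 := by ring
        _ ≤ cm ^ 2 * (‖z t - w t‖ ^ 2 / 2 + 2 * ‖z t - z (m * (t / m))‖ ^ 2) :=
            mul_le_mul_of_nonneg_left hq (sq_nonneg cm)
        _ = cm ^ 2 / 2 * ‖z t - w t‖ ^ 2
            + 2 * cm ^ 2 * ‖z t - z (m * (t / m))‖ ^ 2 := by ring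
    calc A ≤ ∑ t ∈ Finset.range T, (cm ^ 2 / 2 * ‖z t - w t‖ ^ 2
          + 2 * cm ^ 2 * ‖z t - z (m * (t / m))‖ ^ 2) := Finset.sum_le_sum hpt
      _ = cm ^ 2 / 2 * R + 2 * cm ^ 2 * Ds := by
          rw [Finset.sum_add_distrib, ← Finset.mul_sum, ← Finset.mul_sum]
  -- combine the coefficients
  have hcmm : cm * ((m:ℝ) - 1) ≤ 1/4 := by
    have h1 : cm * ((m:ℝ) - 1) ≤ cm * (m:ℝ) := by
      apply mul_le_mul_of_nonneg_left _ hcm_pos.le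
      linarith
    have h2 : cm * (m:ℝ) = 1/4 := by
      rw [hcm]; field_simp
    linarith
  have hcmm0 : 0 ≤ cm * ((m:ℝ) - 1) := mul_nonneg hcm_pos.le (by linarith)
  have hAfin : A ≤ 1/32 * R + 1/8 * P := by
    have h1 : 2 * cm ^ 2 * Ds ≤ 2 * cm ^ 2 * (((m:ℝ) - 1) ^ 2 * P) :=
      mul_le_mul_of_nonneg_left hDsum (by positivity)
    have h2 : 2 * cm ^ 2 * (((m:ℝ) - 1) ^ 2 * P) ≤ 1/8 * P := by
      have h3 : 2 * (cm * ((m:ℝ) - 1)) ^ 2 ≤ 1/8 := by nlinarith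
      nlinarith
    have hcmsq : cm ^ 2 ≤ 1/16 := by nlinarith [hcm_le, hcm_pos]
    have h4 : cm ^ 2 / 2 * R ≤ 1/32 * R := by nlinarith [hcmsq, hR0]
    linarith
  -- final assembly
  rw [sum_eq]
  have hsplit : ∑ t ∈ Finset.range T,
      (1/2 * ‖z (t+1) - w t‖ ^ 2 - 1/2 * ‖z t - w t‖ ^ 2) = 1/2 * A - 1/2 * R := by
    rw [Finset.sum_sub_distrib, ← Finset.mul_sum, ← Finset.mul_sum]
  rw [hsplit]
  linarith
end

section
/- Under the LEN setup, assume F is monotone, F' is L-Lipschitz, M ≥ 4mL, and there exists z* ∈ E with F(z*) = 0; set R := ‖z_0 − z*‖. Then for every integer T ≥ 1 and every z ∈ E, the averaged output z_out := (Σ_{t=0}^{T−1} η_t z_{t+1/2}) / (Σ_{t=0}^{T−1} η_t) satisfies ⟨F(z), z_out − z⟩ ≤ M·R·‖z_0 − z‖² / T^{3/2}. -/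
open scoped RealInnerProductSpace

lemma inner_id {E : Type*} [NormedAddCommGroup E] [InnerProductSpace ℝ E] (a b c d : E) :
    ⟪a - b, c - d⟫ = (‖a - d‖^2 - ‖b - d‖^2 + ‖b - c‖^2 - ‖a - c‖^2)/2 := by
  simp only [← real_inner_self_eq_norm_sq, inner_sub_left, inner_sub_right]
  rw [real_inner_comm d a, real_inner_comm d b, real_inner_comm c a, real_inner_comm c b]
  ring

lemma telescope {E : Type*} [AddCommGroup E] (f : ℕ → E) (a b : ℕ) (h : a ≤ b) :
    f b - f a = ∑ s ∈ Finset.Ico a b, (f (s+1) - f s) := by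
  induction b with
  | zero => simp [Nat.le_zero.mp h]
  | succ n ih =>
    rcases Nat.lt_or_ge a (n+1) with h1 | h1
    · rw [Finset.sum_Ico_succ_top (Nat.lt_succ_iff.mp h1), ← ih (Nat.lt_succ_iff.mp h1)]
      abel
    · have : a = n + 1 := le_antisymm h h1
      simp [this]

lemma seg_norm {E : Type*} [NormedAddCommGroup E] [NormedSpace ℝ E] {x y u : E}
    (hu : u ∈ segment ℝ x y) : ‖u - x‖ ≤ ‖y - x‖ := by
  rcases hu with ⟨a, b, ha, hb, hab, rfl⟩
  have : a • x + b • y - x = b • (y - x) := by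
    have : a = 1 - b := by linarith
    rw [this, smul_sub]; module
  rw [this, norm_smul]
  simp only [Real.norm_eq_abs, abs_of_nonneg hb]
  nlinarith [norm_nonneg (y - x), hb]

lemma taylor_bound {E : Type*} [NormedAddCommGroup E] [InnerProductSpace ℝ E]
    (F : E → E) (F' : E → E →L[ℝ] E) (L : ℝ) (hL : 0 ≤ L)
    (hdiff : ∀ x : E, HasFDerivAt F (F' x) x)
    (hLip : ∀ x y : E, ‖F' x - F' y‖ ≤ L * ‖x - y‖) (x y : E) :
    ‖F y - F x - (F' x) (y - x)‖ ≤ L * ‖y - x‖^2 := by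
  have key : ‖(F y - (F' x) y) - (F x - (F' x) x)‖ ≤ (L * ‖y - x‖) * ‖y - x‖ := by
    apply Convex.norm_image_sub_le_of_norm_hasFDerivWithin_le
      (f' := fun u => F' u - F' x)
      (fun u _ => ((hdiff u).sub ((F' x).hasFDerivAt)).hasFDerivWithinAt)
      (fun u hu => le_trans (hLip u x) (by
        have := seg_norm hu
        nlinarith))
      (convex_segment x y) (left_mem_segment ℝ x y) (right_mem_segment ℝ x y)
  have heq : (F y - (F' x) y) - (F x - (F' x) x) = F y - F x - (F' x) (y - x) := by
    rw [(F' x).map_sub]; abel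
  rw [heq] at key
  calc ‖F y - F x - (F' x) (y - x)‖ ≤ L * ‖y - x‖ * ‖y - x‖ := key
  _ = L * ‖y - x‖^2 := by ring

set_option maxHeartbeats 1600000 in
/-- Under the LEN setup with monotone `F`, `L`-Lipschitz `F'`, `M ≥ 4 m L`, and a root
`z*` of `F`, the averaged output satisfies
`⟨F(z), z_out − z⟩ ≤ M R ‖z_0 − z‖² / T^{3/2}` for every `z`. -/
theorem len_weak_gap_bound
    {E : Type*} [NormedAddCommGroup E] [InnerProductSpace ℝ E] [FiniteDimensional ℝ E]
    (F : E → E) (F' : E → E →L[ℝ] E) (L M : ℝ) (m : ℕ) (hm : 1 ≤ m)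
    (hdiff : ∀ x : E, HasFDerivAt F (F' x) x)
    (hLip : ∀ x y : E, ‖F' x - F' y‖ ≤ L * ‖x - y‖)
    (hmono : ∀ x y : E, 0 ≤ ⟪F x - F y, x - y⟫)
    (hMpos : 0 < M) (hM : 4 * (m : ℝ) * L ≤ M)
    (z w : ℕ → E) (η : ℕ → ℝ)
    (hne : ∀ t, w t ≠ z t)
    (hnewton : ∀ t, F (z t) + F' (z (m * (t / m))) (w t - z t)
        + (M * ‖w t - z t‖) • (w t - z t) = 0)
    (hη : ∀ t, η t = 1 / (M * ‖z t - w t‖))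
    (hupdate : ∀ t, z (t + 1) = z t - η t • F (w t))
    (zstar : E) (hstar : F zstar = 0)
    (R : ℝ) (hR : R = ‖z 0 - zstar‖)
    (T : ℕ) (hT : 1 ≤ T)
    (zout : E)
    (hzout : zout = (∑ t ∈ Finset.range T, η t)⁻¹ • ∑ t ∈ Finset.range T, η t • w t)
    (zz : E) :
    ⟪F zz, zout - zz⟫ ≤ M * R * ‖z 0 - zz‖ ^ 2 / (T : ℝ) ^ ((3 : ℝ) / 2) := by
  have hm0 : 0 < m := hm
  have hmR : (1:ℝ) ≤ (m:ℝ) := by exact_mod_cast hm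
  -- abbreviations
  obtain ⟨r, hr⟩ : ∃ r : ℕ → ℝ, ∀ t, r t = ‖z t - w t‖ := ⟨_, fun _ => rfl⟩
  obtain ⟨e, he⟩ : ∃ e : ℕ → ℝ, ∀ t, e t = ‖z (t+1) - w t‖ := ⟨_, fun _ => rfl⟩
  obtain ⟨d, hd⟩ : ∃ d : ℕ → ℝ, ∀ t, d t = ‖z t - z (m * (t / m))‖ := ⟨_, fun _ => rfl⟩
  obtain ⟨S, hS⟩ : ∃ S : ℕ → ℝ, ∀ t, S t = ∑ s ∈ Finset.Icc (m * (t/m)) t, r s :=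
    ⟨_, fun _ => rfl⟩
  have hrpos : ∀ t, 0 < r t := by
    intro t; rw [hr]; exact norm_pos_iff.mpr (sub_ne_zero.mpr (Ne.symm (hne t)))
  have hrw : ∀ t, ‖w t - z t‖ = r t := by intro t; rw [hr, norm_sub_rev]
  have hL : 0 ≤ L := by
    have h1 := hLip (w 0) (z 0)
    have h2 : 0 < ‖w 0 - z 0‖ := norm_pos_iff.mpr (sub_ne_zero.mpr (hne 0))
    nlinarith [norm_nonneg (F' (w 0) - F' (z 0))]
  have hMr : ∀ t, 0 < M * r t := fun t => mul_pos hMpos (hrpos t)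
  have hηr : ∀ t, η t = 1 / (M * r t) := by intro t; rw [hη, hr]
  have hηpos : ∀ t, 0 < η t := by
    intro t; rw [hηr]; exact one_div_pos.mpr (hMr t)
  -- Newton rearranged
  have hnewton' : ∀ t, (M * r t) • (z t - w t)
      = F (z t) + (F' (z (m * (t/m)))) (w t - z t) := by
    intro t
    have h := hnewton t
    rw [hrw t] at h
    have h2 : -((M * r t) • (w t - z t))
        = F (z t) + (F' (z (m * (t/m)))) (w t - z t) := neg_eq_of_add_eq_zero_left h
    rw [← h2, ← smul_neg, neg_sub]
  -- key identity
  have hkey : ∀ t, (M * r t) • (z (t+1) - w t)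
      = F (z t) + (F' (z (m * (t/m)))) (w t - z t) - F (w t) := by
    intro t
    have h1 : z (t+1) - w t = (z t - w t) - η t • F (w t) := by rw [hupdate t]; abel
    rw [h1, smul_sub, hnewton' t, smul_smul, hηr t,
      mul_one_div, div_self (ne_of_gt (hMr t)), one_smul]
  -- bound on e
  have he_bound : ∀ t, e t ≤ (r t + d t) / (4 * m) := by
    intro t
    have htay := taylor_bound F F' L hL hdiff hLip (z t) (w t)
    have hlip2 : ‖(F' (z t) - F' (z (m * (t/m)))) (w t - z t)‖ ≤ L * d t * r t := by
      calc ‖(F' (z t) - F' (z (m * (t/m)))) (w t - z t)‖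
          ≤ ‖F' (z t) - F' (z (m * (t/m)))‖ * ‖w t - z t‖ :=
            ContinuousLinearMap.le_opNorm _ _
        _ ≤ (L * ‖z t - z (m * (t/m))‖) * ‖w t - z t‖ := by
            apply mul_le_mul_of_nonneg_right (hLip _ _) (norm_nonneg _)
        _ = L * d t * r t := by rw [hd, hrw]
    have hnorm : (M * r t) * e t ≤ L * r t * r t + L * d t * r t := by
      have h1 : ‖(M * r t) • (z (t+1) - w t)‖ = (M * r t) * e t := by
        rw [norm_smul, Real.norm_eq_abs, abs_of_pos (hMr t), he]
      have h2 : F (z t) + (F' (z (m * (t/m)))) (w t - z t) - F (w t)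
          = -((F (w t) - F (z t) - (F' (z t)) (w t - z t))
            + (F' (z t) - F' (z (m * (t/m)))) (w t - z t)) := by
        simp only [ContinuousLinearMap.sub_apply]
        abel
      have h3 : (M * r t) * e t
          ≤ ‖F (w t) - F (z t) - (F' (z t)) (w t - z t)‖
            + ‖(F' (z t) - F' (z (m * (t/m)))) (w t - z t)‖ := by
        rw [← h1, hkey t, h2, norm_neg]
        exact norm_add_le _ _
      have h4 : ‖F (w t) - F (z t) - (F' (z t)) (w t - z t)‖ ≤ L * r t * r t := by
        calc ‖F (w t) - F (z t) - (F' (z t)) (w t - z t)‖ ≤ L * ‖w t - z t‖^2 := htay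
          _ = L * r t * r t := by rw [hrw]; ring
      linarith [h3, h4, hlip2]
    have hdnn : 0 ≤ d t := by rw [hd]; exact norm_nonneg _
    have hrd : 0 ≤ r t + d t := by linarith [(hrpos t).le]
    have hMe : M * e t ≤ L * (r t + d t) := by
      nlinarith [hnorm, hrpos t]
    have hL4 : L ≤ M / (4 * m) := by
      rw [le_div_iff₀ (by positivity : (0:ℝ) < 4 * m)]; linarith
    have hfin : M * e t ≤ M / (4 * m) * (r t + d t) :=
      le_trans hMe (mul_le_mul_of_nonneg_right hL4 hrd)
    have h4m : (0:ℝ) < 4 * m := by positivity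
    rw [← mul_le_mul_iff_right₀ hMpos]
    calc M * e t ≤ M / (4 * m) * (r t + d t) := hfin
      _ = M * ((r t + d t) / (4 * m)) := by ring
  -- block facts
  have hπ_le : ∀ t, m * (t/m) ≤ t := fun t => Nat.mul_div_le t m
  have hπ_eq : ∀ s t : ℕ, m * (t/m) ≤ s → s ≤ t → m * (s/m) = m * (t/m) := by
    intro s t h1 h2
    have ha : t/m ≤ s/m := by
      have := Nat.div_le_div_right (c := m) h1
      rwa [Nat.mul_div_cancel_left _ hm0] at this
    have hb : s/m ≤ t/m := Nat.div_le_div_right h2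
    rw [le_antisymm hb ha]
  have hmod : ∀ t, t - m * (t/m) ≤ m - 1 := by
    intro t
    have h1 := Nat.div_add_mod t m
    have h2 := Nat.mod_lt t hm0
    omega
  -- d bound
  have hd_bound : ∀ t, d t ≤ ∑ s ∈ Finset.Ico (m * (t/m)) t, (e s + r s) := by
    intro t
    have h1 : z t - z (m * (t/m)) = ∑ s ∈ Finset.Ico (m * (t/m)) t, (z (s+1) - z s) :=
      telescope z _ t (hπ_le t)
    rw [hd, h1]
    refine le_trans (norm_sum_le _ _) (Finset.sum_le_sum fun s _ => ?_)
    calc ‖z (s+1) - z s‖ = ‖(z (s+1) - w s) + (w s - z s)‖ := by abel_nf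
      _ ≤ ‖z (s+1) - w s‖ + ‖w s - z s‖ := norm_add_le _ _
      _ = e s + r s := by rw [he, hrw]
  have hSnn : ∀ t, 0 ≤ S t := by
    intro t; rw [hS]; exact Finset.sum_nonneg fun s _ => (hrpos s).le
  have hS_split : ∀ t, S t = (∑ s ∈ Finset.Ico (m * (t/m)) t, r s) + r t := by
    intro t
    rw [hS, ← Finset.Ico_add_one_right_eq_Icc, Finset.sum_Ico_succ_top (hπ_le t)]
  -- e ≤ 2/(3m) S by strong induction
  have he_S : ∀ t, e t ≤ 2/(3 * m) * S t := by
    intro t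
    induction t using Nat.strong_induction_on with
    | _ t ih =>
    have hd2 : d t ≤ (∑ s ∈ Finset.Ico (m * (t/m)) t, r s) + 2/3 * S t := by
      refine le_trans (hd_bound t) ?_
      have hsum : ∑ s ∈ Finset.Ico (m * (t/m)) t, (e s + r s)
          = (∑ s ∈ Finset.Ico (m * (t/m)) t, e s)
            + ∑ s ∈ Finset.Ico (m * (t/m)) t, r s := Finset.sum_add_distrib
      rw [hsum]
      have hesum : ∑ s ∈ Finset.Ico (m * (t/m)) t, e s ≤ 2/3 * S t := by
        have hstep : ∀ s ∈ Finset.Ico (m * (t/m)) t, e s ≤ 2/(3 * m) * S t := by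
          intro s hs
          rw [Finset.mem_Ico] at hs
          have hSle : S s ≤ S t := by
            rw [hS, hS, hπ_eq s t hs.1 hs.2.le]
            exact Finset.sum_le_sum_of_subset_of_nonneg
              (Finset.Icc_subset_Icc_right hs.2.le) (fun i _ _ => (hrpos i).le)
          calc e s ≤ 2/(3 * m) * S s := ih s hs.2
            _ ≤ 2/(3 * m) * S t := by
                apply mul_le_mul_of_nonneg_left hSle (by positivity)
        calc ∑ s ∈ Finset.Ico (m * (t/m)) t, e s
            ≤ (Finset.Ico (m * (t/m)) t).card • (2/(3 * m) * S t) :=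
              Finset.sum_le_card_nsmul _ _ _ hstep
          _ = ((t - m * (t/m) : ℕ) : ℝ) * (2/(3 * m) * S t) := by
              rw [Nat.card_Ico, nsmul_eq_mul]
          _ ≤ (m : ℝ) * (2/(3 * m) * S t) := by
              apply mul_le_mul_of_nonneg_right _ (mul_nonneg (by positivity) (hSnn t))
              exact_mod_cast le_trans (hmod t) (Nat.sub_le m 1)
          _ = 2/3 * S t := by field_simp
      linarith
    have h1 : e t ≤ (r t + d t) / (4 * m) := he_bound t
    have h2 : r t + d t ≤ 5/3 * S t := by
      have := hS_split t
      linarith [hd2]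
    calc e t ≤ (r t + d t) / (4 * m) := h1
      _ ≤ (5/3 * S t) / (4 * m) :=
          (div_le_div_iff_of_pos_right (by positivity : (0:ℝ) < 4 * m)).mpr h2
      _ ≤ 2/(3 * m) * S t := by
          rw [div_le_iff₀ (by positivity : (0:ℝ) < 4 * m)]
          have h8 : 2/(3 * (m:ℝ)) * S t * (4 * m) = 8/3 * S t := by
            field_simp; ring
          rw [h8]
          linarith [hSnn t]
  -- Cauchy-Schwarz on blocks
  have hS_sq : ∀ t, S t^2 ≤ (m:ℝ) * ∑ s ∈ Finset.Icc (m * (t/m)) t, (r s)^2 := by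
    intro t
    have hcs := Finset.sum_mul_sq_le_sq_mul_sq (Finset.Icc (m * (t/m)) t)
      (fun _ => (1:ℝ)) r
    simp only [one_mul, one_pow] at hcs
    have hcard : ((Finset.Icc (m * (t/m)) t).card : ℝ) ≤ (m : ℝ) := by
      rw [Nat.card_Icc]
      have := hmod t
      exact_mod_cast by omega
    calc S t^2 ≤ (∑ _s ∈ Finset.Icc (m * (t/m)) t, (1:ℝ))
          * ∑ s ∈ Finset.Icc (m * (t/m)) t, (r s)^2 := by rw [hS]; exact hcs
      _ = ((Finset.Icc (m * (t/m)) t).card : ℝ)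
          * ∑ s ∈ Finset.Icc (m * (t/m)) t, (r s)^2 := by
          rw [Finset.sum_const, nsmul_eq_mul, mul_one]
      _ ≤ (m:ℝ) * ∑ s ∈ Finset.Icc (m * (t/m)) t, (r s)^2 := by
          apply mul_le_mul_of_nonneg_right hcard
          exact Finset.sum_nonneg fun s _ => sq_nonneg _
  -- swap double sum
  have hswap : ∑ t ∈ Finset.range T, ∑ s ∈ Finset.Icc (m * (t/m)) t, (r s)^2
      ≤ (m:ℝ) * ∑ s ∈ Finset.range T, (r s)^2 := by
    have hstep1 : ∀ t ∈ Finset.range T,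
        ∑ s ∈ Finset.Icc (m * (t/m)) t, (r s)^2
        = ∑ s ∈ Finset.range T, (if s ∈ Finset.Icc (m * (t/m)) t then (r s)^2 else 0) := by
      intro t ht
      rw [Finset.sum_ite_mem, Finset.inter_eq_right.mpr]
      intro s hs
      rw [Finset.mem_Icc] at hs
      rw [Finset.mem_range] at ht ⊢
      omega
    rw [Finset.sum_congr rfl hstep1, Finset.sum_comm]
    have hinner : ∀ s ∈ Finset.range T,
        (∑ t ∈ Finset.range T, if s ∈ Finset.Icc (m * (t/m)) t then (r s)^2 else 0)
        ≤ (m:ℝ) * (r s)^2 := by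
      intro s _
      rw [← Finset.sum_filter]
      rw [Finset.sum_const, nsmul_eq_mul]
      apply mul_le_mul_of_nonneg_right _ (sq_nonneg _)
      have hsub : (Finset.range T).filter (fun t => s ∈ Finset.Icc (m * (t/m)) t)
          ⊆ Finset.Icc s (s + (m - 1)) := by
        intro t ht
        rw [Finset.mem_filter, Finset.mem_Icc] at ht
        rw [Finset.mem_Icc]
        have := hmod t
        omega
      have := Finset.card_le_card hsub
      rw [Nat.card_Icc] at this
      exact_mod_cast by omega
    calc ∑ s ∈ Finset.range T, ∑ t ∈ Finset.range T,
          (if s ∈ Finset.Icc (m * (t/m)) t then (r s)^2 else 0)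
        ≤ ∑ s ∈ Finset.range T, (m:ℝ) * (r s)^2 := Finset.sum_le_sum hinner
      _ = (m:ℝ) * ∑ s ∈ Finset.range T, (r s)^2 := by rw [Finset.mul_sum]
  -- sum of e²
  have he_sq_sum : ∑ t ∈ Finset.range T, (e t)^2
      ≤ 4/9 * ∑ t ∈ Finset.range T, (r t)^2 := by
    have h1 : ∀ t, (e t)^2 ≤ (2/(3*m))^2 * (S t)^2 := by
      intro t
      have h := he_S t
      have henn : 0 ≤ e t := by rw [he]; exact norm_nonneg _
      nlinarith [hSnn t]
    calc ∑ t ∈ Finset.range T, (e t)^2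
        ≤ ∑ t ∈ Finset.range T, (2/(3*m))^2 * (S t)^2 :=
          Finset.sum_le_sum fun t _ => h1 t
      _ ≤ ∑ t ∈ Finset.range T, (2/(3*m))^2
          * ((m:ℝ) * ∑ s ∈ Finset.Icc (m * (t/m)) t, (r s)^2) := by
          apply Finset.sum_le_sum
          intro t _
          exact mul_le_mul_of_nonneg_left (hS_sq t) (by positivity)
      _ = (2/(3*m))^2 * (m:ℝ)
          * ∑ t ∈ Finset.range T, ∑ s ∈ Finset.Icc (m * (t/m)) t, (r s)^2 := by
          rw [Finset.mul_sum]; apply Finset.sum_congr rfl; intro t _; ring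
      _ ≤ (2/(3*m))^2 * (m:ℝ) * ((m:ℝ) * ∑ s ∈ Finset.range T, (r s)^2) := by
          apply mul_le_mul_of_nonneg_left hswap (by positivity)
      _ = (2/(3*(m:ℝ)))^2 * (m:ℝ)^2 * ∑ s ∈ Finset.range T, (r s)^2 := by ring
      _ = 4/9 * ∑ s ∈ Finset.range T, (r s)^2 := by
          have hmne : (m:ℝ) ≠ 0 := by positivity
          field_simp
          ring
  -- one-step identity
  have h_onestep : ∀ (zc : E) (t : ℕ), η t * ⟪F (w t), w t - zc⟫
      = (‖z t - zc‖^2 - ‖z (t+1) - zc‖^2 + (e t)^2 - (r t)^2)/2 := by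
    intro zc t
    have h1 : η t • F (w t) = z t - z (t+1) := by rw [hupdate t]; abel
    calc η t * ⟪F (w t), w t - zc⟫ = ⟪η t • F (w t), w t - zc⟫ :=
          (real_inner_smul_left _ _ _).symm
      _ = ⟪z t - z (t+1), w t - zc⟫ := by rw [h1]
      _ = (‖z t - zc‖^2 - ‖z (t+1) - zc‖^2 + ‖z (t+1) - w t‖^2 - ‖z t - w t‖^2)/2 :=
          inner_id _ _ _ _
      _ = (‖z t - zc‖^2 - ‖z (t+1) - zc‖^2 + (e t)^2 - (r t)^2)/2 := by rw [he, hr]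
  -- summed inequality
  have h_sumineq : ∀ zc : E, ∑ t ∈ Finset.range T, η t * ⟪F (w t), w t - zc⟫
      ≤ ‖z 0 - zc‖^2/2 - 5/18 * ∑ t ∈ Finset.range T, (r t)^2 := by
    intro zc
    have hsum : ∑ t ∈ Finset.range T, η t * ⟪F (w t), w t - zc⟫
        = ((∑ t ∈ Finset.range T, (‖z t - zc‖^2 - ‖z (t+1) - zc‖^2))
          + ∑ t ∈ Finset.range T, (e t)^2 - ∑ t ∈ Finset.range T, (r t)^2)/2 := by
      rw [Finset.sum_congr rfl (fun t _ => h_onestep zc t)]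
      rw [← Finset.sum_div]
      congr 1
      rw [Finset.sum_sub_distrib, Finset.sum_add_distrib]
    have htel : ∑ t ∈ Finset.range T, (‖z t - zc‖^2 - ‖z (t+1) - zc‖^2)
        = ‖z 0 - zc‖^2 - ‖z T - zc‖^2 :=
      Finset.sum_range_sub' (fun t => ‖z t - zc‖^2) T
    rw [hsum, htel]
    have h1 := he_sq_sum
    have h2 : (0:ℝ) ≤ ‖z T - zc‖^2 := sq_nonneg _
    linarith
  -- bound on sum of r²
  have hr_sq_sum : ∑ t ∈ Finset.range T, (r t)^2 ≤ 9/5 * R^2 := by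
    have hpos : 0 ≤ ∑ t ∈ Finset.range T, η t * ⟪F (w t), w t - zstar⟫ := by
      apply Finset.sum_nonneg
      intro t _
      apply mul_nonneg (hηpos t).le
      have := hmono (w t) zstar
      rwa [hstar, sub_zero] at this
    have := h_sumineq zstar
    rw [← hR] at this
    linarith
  have hrsq_nn : (0:ℝ) ≤ ∑ t ∈ Finset.range T, (r t)^2 :=
    Finset.sum_nonneg fun t _ => sq_nonneg _
  have hRnn : 0 ≤ R := by rw [hR]; exact norm_nonneg _
  have hRpos : 0 < R := by
    rcases lt_or_eq_of_le hRnn with h | h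
    · exact h
    · exfalso
      have h0 : (r 0)^2 ≤ ∑ t ∈ Finset.range T, (r t)^2 :=
        Finset.single_le_sum (fun t _ => sq_nonneg (r t))
          (Finset.mem_range.mpr hT)
      nlinarith [hrpos 0]
  -- Cauchy-Schwarz for the stepsizes
  have hT0 : (0:ℝ) < (T:ℝ) := by exact_mod_cast hT
  have hsqT : Real.sqrt T ^ 2 = (T:ℝ) := Real.sq_sqrt hT0.le
  have hsqTpos : 0 < Real.sqrt T := Real.sqrt_pos.mpr hT0
  have hsum_r_nn : 0 ≤ ∑ t ∈ Finset.range T, r t :=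
    Finset.sum_nonneg fun t _ => (hrpos t).le
  have hcs2 : (∑ t ∈ Finset.range T, r t)^2 ≤ (T:ℝ) * ∑ t ∈ Finset.range T, (r t)^2 := by
    have h := Finset.sum_mul_sq_le_sq_mul_sq (Finset.range T) (fun _ => (1:ℝ)) r
    simpa [Finset.card_range] using h
  have hsum_r_le : ∑ t ∈ Finset.range T, r t ≤ Real.sqrt T * (2*R) := by
    have hsq : (∑ t ∈ Finset.range T, r t)^2 ≤ (Real.sqrt T * (2*R))^2 := by
      have : (Real.sqrt T * (2*R))^2 = (T:ℝ) * (4*R^2) := by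
        rw [mul_pow, hsqT]; ring
      rw [this]
      calc (∑ t ∈ Finset.range T, r t)^2 ≤ (T:ℝ) * ∑ t ∈ Finset.range T, (r t)^2 := hcs2
        _ ≤ (T:ℝ) * (9/5 * R^2) := by
            exact mul_le_mul_of_nonneg_left hr_sq_sum hT0.le
        _ ≤ (T:ℝ) * (4*R^2) := mul_le_mul_of_nonneg_left (by nlinarith [sq_nonneg R]) hT0.le
    calc ∑ t ∈ Finset.range T, r t = Real.sqrt ((∑ t ∈ Finset.range T, r t)^2) :=
          (Real.sqrt_sq hsum_r_nn).symm
      _ ≤ Real.sqrt ((Real.sqrt T * (2*R))^2) := Real.sqrt_le_sqrt hsq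
      _ = Real.sqrt T * (2*R) := Real.sqrt_sq (by positivity)
  have hinv_nn : 0 ≤ ∑ t ∈ Finset.range T, 1 / r t :=
    Finset.sum_nonneg fun t _ => le_of_lt (one_div_pos.mpr (hrpos t))
  have hcs1 : (T:ℝ)^2 ≤ (∑ t ∈ Finset.range T, r t) * ∑ t ∈ Finset.range T, 1 / r t := by
    have h := Finset.sum_mul_sq_le_sq_mul_sq (Finset.range T)
      (fun t => Real.sqrt (r t)) (fun t => 1 / Real.sqrt (r t))
    have h1 : ∀ t, Real.sqrt (r t) * (1 / Real.sqrt (r t)) = 1 := by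
      intro t
      have hne0 : Real.sqrt (r t) ≠ 0 := ne_of_gt (Real.sqrt_pos.mpr (hrpos t))
      field_simp
    have h2 : ∀ t, Real.sqrt (r t) ^ 2 = r t := fun t => Real.sq_sqrt (hrpos t).le
    have h3 : ∀ t, (1 / Real.sqrt (r t)) ^ 2 = 1 / r t := by
      intro t; rw [div_pow, one_pow, h2]
    calc (T:ℝ)^2 = (∑ t ∈ Finset.range T, Real.sqrt (r t) * (1 / Real.sqrt (r t)))^2 := by
          rw [Finset.sum_congr rfl (fun t _ => h1 t), Finset.sum_const, Finset.card_range,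
            nsmul_eq_mul, mul_one]
      _ ≤ (∑ t ∈ Finset.range T, Real.sqrt (r t) ^ 2)
          * ∑ t ∈ Finset.range T, (1 / Real.sqrt (r t)) ^ 2 := h
      _ = (∑ t ∈ Finset.range T, r t) * ∑ t ∈ Finset.range T, 1 / r t := by
          rw [Finset.sum_congr rfl (fun t _ => h2 t), Finset.sum_congr rfl (fun t _ => h3 t)]
  -- τ facts
  have hτpos : 0 < (T:ℝ) ^ ((3:ℝ)/2) := Real.rpow_pos_of_pos hT0 _
  have hτeq : (T:ℝ) ^ ((3:ℝ)/2) * Real.sqrt T = (T:ℝ)^2 := by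
    rw [Real.sqrt_eq_rpow, ← Real.rpow_add hT0, ← Real.rpow_natCast (T:ℝ) 2]
    norm_num
  have hinv_ge : (T:ℝ) ^ ((3:ℝ)/2) / (2*R) ≤ ∑ t ∈ Finset.range T, 1 / r t := by
    rw [div_le_iff₀ (by positivity : (0:ℝ) < 2*R)]
    rw [← mul_le_mul_iff_left₀ hsqTpos, hτeq]
    calc (T:ℝ)^2 ≤ (∑ t ∈ Finset.range T, r t) * ∑ t ∈ Finset.range T, 1 / r t := hcs1
      _ ≤ (Real.sqrt T * (2*R)) * ∑ t ∈ Finset.range T, 1 / r t :=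
          mul_le_mul_of_nonneg_right hsum_r_le hinv_nn
      _ = (∑ t ∈ Finset.range T, 1 / r t) * (2*R) * Real.sqrt T := by ring
  have hSη_eq : ∑ t ∈ Finset.range T, η t = (1/M) * ∑ t ∈ Finset.range T, 1 / r t := by
    rw [Finset.mul_sum]
    apply Finset.sum_congr rfl
    intro t _
    rw [hηr t, one_div, mul_inv, ← one_div, ← one_div]
  have hSη_ge : (T:ℝ) ^ ((3:ℝ)/2) / (2*M*R) ≤ ∑ t ∈ Finset.range T, η t := by
    rw [hSη_eq]
    have h := mul_le_mul_of_nonneg_left hinv_ge (by positivity : (0:ℝ) ≤ 1/M)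
    calc (T:ℝ) ^ ((3:ℝ)/2) / (2*M*R) = (1/M) * ((T:ℝ) ^ ((3:ℝ)/2) / (2*R)) := by
          rw [one_div_mul_eq_div, div_div]
          ring_nf
      _ ≤ (1/M) * ∑ t ∈ Finset.range T, 1 / r t := h
  have hSηpos : 0 < ∑ t ∈ Finset.range T, η t :=
    lt_of_lt_of_le (div_pos hτpos (by positivity)) hSη_ge
  -- final assembly
  have hzo : zout - zz
      = (∑ t ∈ Finset.range T, η t)⁻¹ • ∑ t ∈ Finset.range T, η t • (w t - zz) := by
    rw [hzout]
    have h1 : ∑ t ∈ Finset.range T, η t • (w t - zz)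
        = (∑ t ∈ Finset.range T, η t • w t) - (∑ t ∈ Finset.range T, η t) • zz := by
      rw [Finset.sum_smul]
      rw [← Finset.sum_sub_distrib]
      apply Finset.sum_congr rfl
      intro t _
      rw [smul_sub]
    rw [h1, smul_sub, smul_smul, inv_mul_cancel₀ (ne_of_gt hSηpos), one_smul]
  have hip : ⟪F zz, zout - zz⟫
      = (∑ t ∈ Finset.range T, η t)⁻¹ * ∑ t ∈ Finset.range T, η t * ⟪F zz, w t - zz⟫ := by
    rw [hzo, real_inner_smul_right, inner_sum]
    congr 1
    apply Finset.sum_congr rfl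
    intro t _
    rw [real_inner_smul_right]
  have hterm : ∀ t ∈ Finset.range T,
      η t * ⟪F zz, w t - zz⟫ ≤ η t * ⟪F (w t), w t - zz⟫ := by
    intro t _
    apply mul_le_mul_of_nonneg_left _ (hηpos t).le
    have h := hmono (w t) zz
    rw [inner_sub_left] at h
    linarith
  have hupper : ∑ t ∈ Finset.range T, η t * ⟪F zz, w t - zz⟫ ≤ ‖z 0 - zz‖^2/2 := by
    calc ∑ t ∈ Finset.range T, η t * ⟪F zz, w t - zz⟫
        ≤ ∑ t ∈ Finset.range T, η t * ⟪F (w t), w t - zz⟫ := Finset.sum_le_sum hterm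
      _ ≤ ‖z 0 - zz‖^2/2 - 5/18 * ∑ t ∈ Finset.range T, (r t)^2 := h_sumineq zz
      _ ≤ ‖z 0 - zz‖^2/2 := by linarith [hrsq_nn]
  have hinv_le : (∑ t ∈ Finset.range T, η t)⁻¹
      ≤ 2*M*R / (T:ℝ) ^ ((3:ℝ)/2) := by
    have h := inv_anti₀ (by positivity : (0:ℝ) < (T:ℝ) ^ ((3:ℝ)/2) / (2*M*R)) hSη_ge
    rwa [inv_div] at h
  calc ⟪F zz, zout - zz⟫
      = (∑ t ∈ Finset.range T, η t)⁻¹ * ∑ t ∈ Finset.range T, η t * ⟪F zz, w t - zz⟫ := hip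
    _ ≤ (∑ t ∈ Finset.range T, η t)⁻¹ * (‖z 0 - zz‖^2/2) :=
        mul_le_mul_of_nonneg_left hupper (inv_nonneg.mpr hSηpos.le)
    _ ≤ (2*M*R / (T:ℝ) ^ ((3:ℝ)/2)) * (‖z 0 - zz‖^2/2) :=
        mul_le_mul_of_nonneg_right hinv_le (by positivity)
    _ = M * R * ‖z 0 - zz‖ ^ 2 / (T : ℝ) ^ ((3 : ℝ) / 2) := by ring
end

section
/- Under the LEN setup applied to the saddle operator of a convex-concave function, assume F' is L-Lipschitz, M ≥ 4mL, and z* = (x*, y*) satisfies F(z*) = 0; set R := ‖z_0 − z*‖ (norm in X × Y). Then for every integer T ≥ 1, the averaged output z_out = (x_out, y_out) := (Σ_{t=0}^{T−1} η_t z_{t+1/2}) / (Σ_{t=0}^{T−1} η_t) satisfies: for every x ∈ X with ‖x − x*‖ ≤ 3R and every y ∈ Y with ‖y − y*‖ ≤ 3R, f(x_out, y) − f(x, y_out) ≤ 32·M·R³ / T^{3/2}. -/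
open scoped RealInnerProductSpace

section Aux

variable {V : Type*} [NormedAddCommGroup V] [InnerProductSpace ℝ V]

lemma grad_ineq [CompleteSpace V]
    {g : V → ℝ} (hg : ConvexOn ℝ Set.univ g) {G : V} {a : V} (h : HasGradientAt g G a) (b : V) :
    g a + ⟪G, b - a⟫ ≤ g b := by
  have hline : HasDerivAt (fun t : ℝ => t • (b - a) + a) (b - a) 0 := by
    simpa using ((hasDerivAt_id (0:ℝ)).smul_const (b - a)).add_const a
  have hfd : HasFDerivAt g ((InnerProductSpace.toDual ℝ V) G) ((0:ℝ) • (b - a) + a) := by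
    simpa using h.hasFDerivAt
  have hφ : HasDerivAt (fun t : ℝ => g (t • (b - a) + a)) ⟪G, b - a⟫ 0 := by
    simpa [InnerProductSpace.toDual_apply_apply, Function.comp_def] using hfd.comp_hasDerivAt 0 hline
  have hc : ConvexOn ℝ Set.univ (fun t : ℝ => g (t • (b - a) + a)) := by
    have heq : (fun t : ℝ => g (t • (b - a) + a)) = g ∘ (AffineMap.lineMap a b : ℝ →ᵃ[ℝ] V) := by
      funext t; simp only [Function.comp_apply, AffineMap.lineMap_apply_module]; congr 1; module
    rw [heq]
    simpa using hg.comp_affineMap (AffineMap.lineMap a b : ℝ →ᵃ[ℝ] V)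
  have := hc.le_slope_of_hasDerivAt (Set.mem_univ 0) (Set.mem_univ 1) zero_lt_one hφ
  simp only [slope_def_field] at this
  simp only [zero_smul, zero_add, one_smul, sub_add_cancel] at this
  linarith [this]

/-- the HPE / extragradient four-point identity -/
lemma hpe_identity (a v u w : V) :
    2 * ⟪v, w - u⟫ = ‖a - u‖^2 - ‖a - v - u‖^2 - (‖a - w‖^2 - ‖a - v - w‖^2) := by
  have e1 : a - v - u = (a - u) - v := by abel
  have e2 : a - v - w = (a - w) - v := by abel
  rw [e1, e2, norm_sub_sq_real (a - u) v, norm_sub_sq_real (a - w) v]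
  have e3 : ⟪a - u, v⟫ - ⟪a - w, v⟫ = ⟪v, w - u⟫ := by
    rw [← inner_sub_left, real_inner_comm]
    congr 1
    abel
  linarith [e3]

lemma inv_lower {r b : ℝ} (hr : 0 < r) (hb : 0 < b) :
    3 / (2*b) - r^2 / (2*b^3) ≤ 1 / r := by
  rw [div_sub_div _ _ (by positivity) (by positivity), div_le_div_iff₀ (by positivity) hr]
  nlinarith [mul_nonneg (sq_nonneg (r - b)) (by positivity : (0:ℝ) ≤ r + 2*b),
    pow_pos hb 2, pow_pos hb 3, mul_pos hr hb]

lemma exp_quarter : Real.exp (1/4) ≤ 4/3 := by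
  have h := Real.add_one_le_exp (-(1/4) : ℝ)
  have h2 : Real.exp (-(1/4)) = (Real.exp (1/4))⁻¹ := by rw [Real.exp_neg]
  have h3 := Real.exp_pos (1/4 : ℝ)
  rw [h2] at h
  rw [inv_eq_one_div] at h
  rw [le_div_iff₀ h3] at h
  linarith

end Aux

set_option maxHeartbeats 2000000 in
/-- LEN applied to the saddle operator `F(x,y) = (∇ₓ f, −∇_y f)` of a convex-concave
function: the averaged output satisfies the restricted primal-dual gap bound
`f(x_out, y) − f(x, y_out) ≤ 32 M R³ / T^{3/2}` over the ball of radius `3R`. -/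
theorem len_saddle_gap_bound
    {X Y : Type*} [NormedAddCommGroup X] [InnerProductSpace ℝ X] [FiniteDimensional ℝ X]
    [NormedAddCommGroup Y] [InnerProductSpace ℝ Y] [FiniteDimensional ℝ Y]
    (f : X → Y → ℝ)
    (hconv : ∀ y : Y, ConvexOn ℝ Set.univ (fun x => f x y))
    (hconc : ∀ x : X, ConcaveOn ℝ Set.univ (fun y => f x y))
    (Fx : X → Y → X) (Fy : X → Y → Y)
    (hFx : ∀ (x : X) (y : Y), HasGradientAt (fun x' => f x' y) (Fx x y) x)
    (hFy : ∀ (x : X) (y : Y), HasGradientAt (fun y' => f x y') (Fy x y) y)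
    (F : WithLp 2 (X × Y) → WithLp 2 (X × Y))
    (hF : ∀ p : WithLp 2 (X × Y),
      (WithLp.equiv 2 (X × Y)) (F p) =
        (Fx ((WithLp.equiv 2 (X × Y)) p).1 ((WithLp.equiv 2 (X × Y)) p).2,
          -(Fy ((WithLp.equiv 2 (X × Y)) p).1 ((WithLp.equiv 2 (X × Y)) p).2)))
    (F' : WithLp 2 (X × Y) → WithLp 2 (X × Y) →L[ℝ] WithLp 2 (X × Y))
    (L M : ℝ) (m : ℕ) (hm : 1 ≤ m)
    (hdiff : ∀ p : WithLp 2 (X × Y), HasFDerivAt F (F' p) p)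
    (hLip : ∀ p q : WithLp 2 (X × Y), ‖F' p - F' q‖ ≤ L * ‖p - q‖)
    (hMpos : 0 < M) (hM : 4 * (m : ℝ) * L ≤ M)
    (z w : ℕ → WithLp 2 (X × Y)) (η : ℕ → ℝ)
    (hne : ∀ t, w t ≠ z t)
    (hnewton : ∀ t, F (z t) + F' (z (m * (t / m))) (w t - z t)
        + (M * ‖w t - z t‖) • (w t - z t) = 0)
    (hη : ∀ t, η t = 1 / (M * ‖z t - w t‖))
    (hupdate : ∀ t, z (t + 1) = z t - η t • F (w t))
    (zstar : WithLp 2 (X × Y)) (hstar : F zstar = 0)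
    (R : ℝ) (hR : R = ‖z 0 - zstar‖)
    (T : ℕ) (hT : 1 ≤ T)
    (zout : WithLp 2 (X × Y))
    (hzout : zout = (∑ t ∈ Finset.range T, η t)⁻¹ • ∑ t ∈ Finset.range T, η t • w t) :
    ∀ x : X, ‖x - ((WithLp.equiv 2 (X × Y)) zstar).1‖ ≤ 3 * R →
      ∀ y : Y, ‖y - ((WithLp.equiv 2 (X × Y)) zstar).2‖ ≤ 3 * R →
        f ((WithLp.equiv 2 (X × Y)) zout).1 y - f x ((WithLp.equiv 2 (X × Y)) zout).2
          ≤ 32 * M * R ^ 3 / (T : ℝ) ^ ((3 : ℝ) / 2) := by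
  intro x hx y hy
  classical
  have hm0 : 0 < m := hm
  -- abbreviations
  let q1 : WithLp 2 (X × Y) → X := fun p => ((WithLp.equiv 2 (X × Y)) p).1
  let q2 : WithLp 2 (X × Y) → Y := fun p => ((WithLp.equiv 2 (X × Y)) p).2
  have hinner : ∀ p q : WithLp 2 (X × Y), ⟪p, q⟫ = ⟪q1 p, q1 q⟫ + ⟪q2 p, q2 q⟫ := fun p q => rfl
  have hq1F : ∀ p : WithLp 2 (X × Y), q1 (F p) = Fx (q1 p) (q2 p) := fun p => congrArg Prod.fst (hF p)
  have hq2F : ∀ p : WithLp 2 (X × Y), q2 (F p) = -(Fy (q1 p) (q2 p)) := fun p => congrArg Prod.snd (hF p)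
  have hq1sub : ∀ p q : WithLp 2 (X × Y), q1 (p - q) = q1 p - q1 q := fun p q => rfl
  have hq2sub : ∀ p q : WithLp 2 (X × Y), q2 (p - q) = q2 p - q2 q := fun p q => rfl
  let u : WithLp 2 (X × Y) := (WithLp.equiv 2 (X × Y)).symm (x, y)
  have hq1u : q1 u = x := rfl
  have hq2u : q2 u = y := rfl
  -- basic positivity
  have hr : ∀ t, (0:ℝ) < ‖w t - z t‖ := fun t => norm_pos_iff.mpr (sub_ne_zero.mpr (hne t))
  have hL0 : 0 ≤ L := by
    have h1 := hLip (w 0) (z 0)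
    have h2 := norm_nonneg (F' (w 0) - F' (z 0))
    nlinarith [hr 0]
  have hα : 0 ≤ L / M := div_nonneg hL0 hMpos.le
  have hαm : (L / M) * m ≤ 1/4 := by
    rw [div_mul_eq_mul_div, div_le_iff₀ hMpos]
    nlinarith
  have hηr : ∀ t, η t = 1 / (M * ‖w t - z t‖) := by
    intro t; rw [hη t, norm_sub_rev]
  have hηpos : ∀ t, 0 < η t := by
    intro t; rw [hηr t]; exact one_div_pos.mpr (mul_pos hMpos (hr t))
  have hgradneg : ∀ (a : X) (b : Y), HasGradientAt (fun y' => -(f a y')) (-(Fy a b)) b := by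
    intro a b
    rw [hasGradientAt_iff_hasFDerivAt]
    have := (hFy a b).hasFDerivAt.neg
    convert this using 1
    · rfl
    · rfl
    · ext v; simp [InnerProductSpace.toDual_apply_apply, inner_neg_left]
    · ext v; simp [InnerProductSpace.toDual_apply_apply, inner_neg_left]
  have hconcneg : ∀ a : X, ConvexOn ℝ Set.univ (fun y' => -(f a y')) := by
    intro a
    simpa [Pi.neg_def] using (hconc a).neg
  -- monotonicity of F
  have mono : ∀ p q : WithLp 2 (X × Y), (0:ℝ) ≤ ⟪F p - F q, p - q⟫ := by
    intro p q
    have g1 := grad_ineq (hconv (q2 p)) (hFx (q1 p) (q2 p)) (q1 q)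
    have g2 := grad_ineq (hconv (q2 q)) (hFx (q1 q) (q2 q)) (q1 p)
    have g3 := grad_ineq (hconcneg (q1 p)) (hgradneg (q1 p) (q2 p)) (q2 q)
    have g4 := grad_ineq (hconcneg (q1 q)) (hgradneg (q1 q) (q2 q)) (q2 p)
    have e1 : ⟪Fx (q1 p) (q2 p), q1 q - q1 p⟫ = -⟪Fx (q1 p) (q2 p), q1 p - q1 q⟫ := by
      rw [← inner_neg_right]; congr 1; abel
    have e3 : ⟪-(Fy (q1 p) (q2 p)), q2 q - q2 p⟫ = -⟪-(Fy (q1 p) (q2 p)), q2 p - q2 q⟫ := by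
      rw [← inner_neg_right]; congr 1; abel
    rw [hinner, hq1sub (F p) (F q), hq2sub (F p) (F q), hq1sub p q, hq2sub p q,
      hq1F p, hq1F q, hq2F p, hq2F q, inner_sub_left, inner_sub_left]
    rw [e1] at g1
    rw [e3] at g3
    linarith
  -- per-term gap bound
  have gapterm : ∀ t, f (q1 (w t)) y - f x (q2 (w t)) ≤ ⟪F (w t), w t - u⟫ := by
    intro t
    have ga := grad_ineq (hconv (q2 (w t))) (hFx (q1 (w t)) (q2 (w t))) x
    have gb := grad_ineq (hconcneg (q1 (w t))) (hgradneg (q1 (w t)) (q2 (w t))) y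
    have e1 : ⟪Fx (q1 (w t)) (q2 (w t)), x - q1 (w t)⟫
        = -⟪Fx (q1 (w t)) (q2 (w t)), q1 (w t) - x⟫ := by
      rw [← inner_neg_right]; congr 1; abel
    have e2 : ⟪-(Fy (q1 (w t)) (q2 (w t))), y - q2 (w t)⟫
        = -⟪-(Fy (q1 (w t)) (q2 (w t))), q2 (w t) - y⟫ := by
      rw [← inner_neg_right]; congr 1; abel
    rw [hinner, hq1sub (w t) u, hq2sub (w t) u, hq1F (w t), hq2F (w t), hq1u, hq2u]
    rw [e1] at ga
    rw [e2] at gb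
    linarith
  -- Taylor error bound
  have herr : ∀ t, ‖F (w t) - F (z t) - F' (z (m * (t/m))) (w t - z t)‖
      ≤ L * (‖z t - z (m*(t/m))‖ + ‖w t - z t‖) * ‖w t - z t‖ := by
    intro t
    have hseg : ∀ v ∈ segment ℝ (z t) (w t),
        ‖F' v - F' (z (m*(t/m)))‖ ≤ L * (‖z t - z (m*(t/m))‖ + ‖w t - z t‖) := by
      intro v hv
      obtain ⟨θ1, θ2, hθ1, hθ2, hθsum, rfl⟩ := hv
      have hθ1' : θ1 = 1 - θ2 := by linarith
      have hvz : θ1 • z t + θ2 • w t - z t = θ2 • (w t - z t) := by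
        rw [hθ1']; module
      have hnv : ‖θ1 • z t + θ2 • w t - z t‖ ≤ ‖w t - z t‖ := by
        rw [hvz, norm_smul, Real.norm_eq_abs, abs_of_nonneg hθ2]
        nlinarith [hr t]
      calc ‖F' (θ1 • z t + θ2 • w t) - F' (z (m*(t/m)))‖
          ≤ L * ‖θ1 • z t + θ2 • w t - z (m*(t/m))‖ := hLip _ _
        _ ≤ L * (‖z t - z (m*(t/m))‖ + ‖w t - z t‖) := by
            have htri : ‖θ1 • z t + θ2 • w t - z (m*(t/m))‖
                ≤ ‖θ1 • z t + θ2 • w t - z t‖ + ‖z t - z (m*(t/m))‖ := by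
              have he : θ1 • z t + θ2 • w t - z (m*(t/m))
                  = (θ1 • z t + θ2 • w t - z t) + (z t - z (m*(t/m))) := by abel
              rw [he]; exact norm_add_le _ _
            nlinarith [hL0, norm_nonneg (θ1 • z t + θ2 • w t - z (m*(t/m)))]
    have := Convex.norm_image_sub_le_of_norm_hasFDerivWithin_le'
      (fun v _ => (hdiff v).hasFDerivWithinAt) hseg (convex_segment (z t) (w t))
      (left_mem_segment ℝ (z t) (w t)) (right_mem_segment ℝ (z t) (w t))
    linarith [this]
  -- the extragradient step lands close to w t
  have hηc : ∀ t, η t * (M * ‖w t - z t‖) = 1 := by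
    intro t
    rw [hηr t]
    exact one_div_mul_cancel (mul_pos hMpos (hr t)).ne'
  have hzw : ∀ t, z (t+1) - w t
      = -(η t • (F (w t) - F (z t) - F' (z (m*(t/m))) (w t - z t))) := by
    intro t
    have h2 : F (z t) + F' (z (m*(t/m))) (w t - z t)
        = -((M * ‖w t - z t‖) • (w t - z t)) :=
      eq_neg_of_add_eq_zero_left (hnewton t)
    have hFw : F (w t) = (F (w t) - F (z t) - F' (z (m*(t/m))) (w t - z t))
        - (M * ‖w t - z t‖) • (w t - z t) := by
      rw [show F (w t) - F (z t) - F' (z (m*(t/m))) (w t - z t)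
          = F (w t) - (F (z t) + F' (z (m*(t/m))) (w t - z t)) by abel, h2]
      abel
    rw [hupdate t]
    nth_rewrite 1 [hFw]
    rw [smul_sub, smul_smul, hηc t, one_smul]
    abel
  have hzwnorm : ∀ t, ‖z (t+1) - w t‖
      ≤ (L/M) * (‖z t - z (m*(t/m))‖ + ‖w t - z t‖) := by
    intro t
    rw [hzw t, norm_neg, norm_smul, Real.norm_eq_abs, abs_of_pos (hηpos t), hηr t]
    rw [div_mul_eq_mul_div, one_mul, div_mul_eq_mul_div, div_le_div_iff₀ (mul_pos hMpos (hr t)) hMpos]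
    have h := herr t
    nlinarith [hr t, norm_nonneg (F (w t) - F (z t) - F' (z (m*(t/m))) (w t - z t))]
  -- per-step inequality
  have step : ∀ (v : WithLp 2 (X × Y)) (t : ℕ), 2 * (η t * ⟪F (w t), w t - v⟫)
      ≤ ‖z t - v‖^2 - ‖z (t+1) - v‖^2 - ‖w t - z t‖^2
        + ((L/M) * (‖z t - z (m*(t/m))‖ + ‖w t - z t‖))^2 := by
    intro v t
    have hid := hpe_identity (z t) (η t • F (w t)) v (w t)
    rw [real_inner_smul_left] at hid
    have hz1 : z t - η t • F (w t) = z (t+1) := (hupdate t).symm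
    rw [show z t - η t • F (w t) - v = z (t+1) - v by rw [← hz1],
        show z t - η t • F (w t) - w t = z (t+1) - w t by rw [← hz1]] at hid
    have hsq : ‖z (t+1) - w t‖^2 ≤ ((L/M) * (‖z t - z (m*(t/m))‖ + ‖w t - z t‖))^2 := by
      have h1 := hzwnorm t
      have h2 := norm_nonneg (z (t+1) - w t)
      nlinarith
    have hrev : ‖z t - w t‖ = ‖w t - z t‖ := norm_sub_rev _ _
    rw [hrev] at hid
    linarith
  -- distance to the snapshot
  have hmove : ∀ t, ‖z (t+1) - z t‖
      ≤ ‖w t - z t‖ + (L/M) * (‖z t - z (m*(t/m))‖ + ‖w t - z t‖) := by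
    intro t
    have he : z (t+1) - z t = (z (t+1) - w t) + (w t - z t) := by abel
    rw [he]
    have := norm_add_le (z (t+1) - w t) (w t - z t)
    linarith [hzwnorm t]
  have claim : ∀ t, ‖z t - z (m*(t/m))‖
      ≤ (1+L/M)^(t - m*(t/m)) * ∑ s ∈ Finset.Ico (m*(t/m)) t, ‖w s - z s‖ := by
    intro t
    induction t with
    | zero => simp
    | succ t ih =>
      by_cases hdvd : m ∣ (t+1)
      · have hc : m * ((t+1)/m) = t+1 := Nat.mul_div_cancel' hdvd
        rw [hc]
        simp
      · have hdiv : (t+1)/m = t/m := by rw [Nat.succ_div, if_neg hdvd]; omega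
        have hπle : m * (t/m) ≤ t := Nat.mul_div_le t m
        have hsub : (t+1) - m*((t+1)/m) = (t - m*(t/m)) + 1 := by rw [hdiv]; omega
        have hsum : ∑ s ∈ Finset.Ico (m*((t+1)/m)) (t+1), ‖w s - z s‖
            = (∑ s ∈ Finset.Ico (m*(t/m)) t, ‖w s - z s‖) + ‖w t - z t‖ := by
          rw [hdiv, Finset.sum_Ico_succ_top hπle]
        have h1 : ‖z (t+1) - z (m*((t+1)/m))‖
            ≤ ‖z (t+1) - z t‖ + ‖z t - z (m*(t/m))‖ := by
          rw [hdiv]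
          have he : z (t+1) - z (m*(t/m)) = (z (t+1) - z t) + (z t - z (m*(t/m))) := by abel
          rw [he]; exact norm_add_le _ _
        have hA : (1:ℝ) ≤ (1+L/M)^(t - m*(t/m)) := one_le_pow₀ (by linarith)
        have hSnn : (0:ℝ) ≤ ∑ s ∈ Finset.Ico (m*(t/m)) t, ‖w s - z s‖ :=
          Finset.sum_nonneg fun s _ => norm_nonneg _
        rw [hsum, hsub, pow_succ]
        calc ‖z (t+1) - z (m*((t+1)/m))‖
            ≤ ‖z (t+1) - z t‖ + ‖z t - z (m*(t/m))‖ := h1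
          _ ≤ (‖w t - z t‖ + (L/M) * (‖z t - z (m*(t/m))‖ + ‖w t - z t‖))
                + ‖z t - z (m*(t/m))‖ := by linarith [hmove t]
          _ = (1+L/M) * (‖z t - z (m*(t/m))‖ + ‖w t - z t‖) := by ring
          _ ≤ (1+L/M) * ((1+L/M)^(t - m*(t/m)) * (∑ s ∈ Finset.Ico (m*(t/m)) t, ‖w s - z s‖)
                + ‖w t - z t‖) :=
              mul_le_mul_of_nonneg_left (by linarith [ih]) (by linarith)
          _ ≤ (1+L/M) * ((1+L/M)^(t - m*(t/m))
                * ((∑ s ∈ Finset.Ico (m*(t/m)) t, ‖w s - z s‖) + ‖w t - z t‖)) := by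
              apply mul_le_mul_of_nonneg_left _ (by linarith : (0:ℝ) ≤ 1+L/M)
              nlinarith [hA, (hr t).le]
          _ = (1+L/M)^(t - m*(t/m)) * (1+L/M)
                * ((∑ s ∈ Finset.Ico (m*(t/m)) t, ‖w s - z s‖) + ‖w t - z t‖) := by ring
  have hfac : (1+L/M)^m ≤ (4:ℝ)/3 := by
    have h1 : (1+L/M)^m ≤ Real.exp (L/M) ^ m := by
      apply pow_le_pow_left₀ (by linarith)
      linarith [Real.add_one_le_exp (L/M)]
    have h2 : Real.exp (L/M) ^ m = Real.exp (m * (L/M)) := (Real.exp_nat_mul _ m).symm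
    have h3 : Real.exp (m * (L/M)) ≤ Real.exp (1/4) := by
      apply Real.exp_le_exp.mpr
      calc (m:ℝ) * (L/M) = (L/M) * m := by ring
        _ ≤ 1/4 := hαm
    calc (1+L/M)^m ≤ Real.exp (L/M) ^ m := h1
      _ = Real.exp (m * (L/M)) := h2
      _ ≤ Real.exp (1/4) := h3
      _ ≤ 4/3 := exp_quarter
  have hD : ∀ t, ‖z t - z (m*(t/m))‖
      ≤ (4/3) * ∑ s ∈ Finset.Ico (m*(t/m)) t, ‖w s - z s‖ := by
    intro t
    have hexp : t - m*(t/m) ≤ m := by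
      have := Nat.div_add_mod t m
      have := Nat.mod_lt t hm0
      omega
    have hmono : (1+L/M)^(t - m*(t/m)) ≤ (1+L/M)^m :=
      pow_le_pow_right₀ (by linarith) hexp
    have hSnn : (0:ℝ) ≤ ∑ s ∈ Finset.Ico (m*(t/m)) t, ‖w s - z s‖ :=
      Finset.sum_nonneg fun s _ => norm_nonneg _
    calc ‖z t - z (m*(t/m))‖ ≤ (1+L/M)^(t - m*(t/m)) * ∑ s ∈ Finset.Ico (m*(t/m)) t, ‖w s - z s‖ :=
          claim t
      _ ≤ (4/3) * ∑ s ∈ Finset.Ico (m*(t/m)) t, ‖w s - z s‖ :=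
          mul_le_mul_of_nonneg_right (le_trans hmono hfac) hSnn
  -- aggregated error bound
  have haggr : ∑ t ∈ Finset.range T, ((L/M) * (‖z t - z (m*(t/m))‖ + ‖w t - z t‖))^2
      ≤ (1/9) * ∑ t ∈ Finset.range T, ‖w t - z t‖^2 := by
    have hper : ∀ t, ((L/M) * (‖z t - z (m*(t/m))‖ + ‖w t - z t‖))^2
        ≤ (16/9) * (L/M)^2 * m * ∑ s ∈ Finset.Icc (m*(t/m)) t, ‖w s - z s‖^2 := by
      intro t
      have hπle : m * (t/m) ≤ t := Nat.mul_div_le t m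
      have hIcc : Finset.Icc (m*(t/m)) t = Finset.Ico (m*(t/m)) (t+1) :=
        (Finset.Ico_add_one_right_eq_Icc _ _)
      have hS1 : ∑ s ∈ Finset.Icc (m*(t/m)) t, ‖w s - z s‖
          = (∑ s ∈ Finset.Ico (m*(t/m)) t, ‖w s - z s‖) + ‖w t - z t‖ := by
        rw [hIcc, Finset.sum_Ico_succ_top hπle]
      have hDr : ‖z t - z (m*(t/m))‖ + ‖w t - z t‖
          ≤ (4/3) * ∑ s ∈ Finset.Icc (m*(t/m)) t, ‖w s - z s‖ := by
        rw [hS1]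
        have := hD t
        linarith [hr t]
      have hCS : (∑ s ∈ Finset.Icc (m*(t/m)) t, ‖w s - z s‖)^2
          ≤ (Finset.Icc (m*(t/m)) t).card * ∑ s ∈ Finset.Icc (m*(t/m)) t, ‖w s - z s‖^2 :=
        sq_sum_le_card_mul_sum_sq
      have hcard : ((Finset.Icc (m*(t/m)) t).card : ℝ) ≤ m := by
        rw [Nat.card_Icc]
        have h1 := Nat.div_add_mod t m
        have h2 := Nat.mod_lt t hm0
        have : t + 1 - m*(t/m) ≤ m := by omega
        exact_mod_cast this
      have hsqnn : (0:ℝ) ≤ ∑ s ∈ Finset.Icc (m*(t/m)) t, ‖w s - z s‖^2 :=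
        Finset.sum_nonneg fun s _ => sq_nonneg _
      have hDrnn : (0:ℝ) ≤ ‖z t - z (m*(t/m))‖ + ‖w t - z t‖ :=
        add_nonneg (norm_nonneg _) (norm_nonneg _)
      have e2 : (‖z t - z (m*(t/m))‖ + ‖w t - z t‖)^2
          ≤ (16/9) * (∑ s ∈ Finset.Icc (m*(t/m)) t, ‖w s - z s‖)^2 := by
        nlinarith [hDr, hDrnn]
      have e3 : (∑ s ∈ Finset.Icc (m*(t/m)) t, ‖w s - z s‖)^2
          ≤ (m:ℝ) * ∑ s ∈ Finset.Icc (m*(t/m)) t, ‖w s - z s‖^2 :=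
        le_trans hCS (mul_le_mul_of_nonneg_right hcard hsqnn)
      calc ((L/M) * (‖z t - z (m*(t/m))‖ + ‖w t - z t‖))^2
          = (L/M)^2 * (‖z t - z (m*(t/m))‖ + ‖w t - z t‖)^2 := by ring
        _ ≤ (L/M)^2 * ((16/9) * (∑ s ∈ Finset.Icc (m*(t/m)) t, ‖w s - z s‖)^2) :=
            mul_le_mul_of_nonneg_left e2 (sq_nonneg _)
        _ ≤ (L/M)^2 * ((16/9) * ((m:ℝ) * ∑ s ∈ Finset.Icc (m*(t/m)) t, ‖w s - z s‖^2)) := by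
            apply mul_le_mul_of_nonneg_left _ (sq_nonneg _)
            linarith [e3]
        _ = (16/9) * (L/M)^2 * m * ∑ s ∈ Finset.Icc (m*(t/m)) t, ‖w s - z s‖^2 := by ring
    have hswap : ∑ t ∈ Finset.range T, ∑ s ∈ Finset.Icc (m*(t/m)) t, ‖w s - z s‖^2
        ≤ m * ∑ s ∈ Finset.range T, ‖w s - z s‖^2 := by
      have hre : ∀ t ∈ Finset.range T, ∑ s ∈ Finset.Icc (m*(t/m)) t, ‖w s - z s‖^2
          = ∑ s ∈ Finset.range T, if s ∈ Finset.Icc (m*(t/m)) t then ‖w s - z s‖^2 else 0 := by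
        intro t ht
        rw [Finset.sum_ite_mem]
        apply Finset.sum_congr _ (fun _ _ => rfl)
        rw [Finset.inter_eq_right.mpr]
        intro s hs
        rw [Finset.mem_Icc] at hs
        rw [Finset.mem_range] at ht ⊢
        omega
      rw [Finset.sum_congr rfl hre, Finset.sum_comm]
      have hin : ∀ s ∈ Finset.range T,
          (∑ t ∈ Finset.range T, if s ∈ Finset.Icc (m*(t/m)) t then ‖w s - z s‖^2 else 0)
          ≤ m * ‖w s - z s‖^2 := by
        intro s hs
        rw [Finset.sum_ite, Finset.sum_const_zero, add_zero, Finset.sum_const, nsmul_eq_mul]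
        have hsubset : (Finset.range T).filter (fun t => s ∈ Finset.Icc (m*(t/m)) t)
            ⊆ Finset.Ico s (s+m) := by
          intro t ht
          rw [Finset.mem_filter, Finset.mem_Icc] at ht
          rw [Finset.mem_Ico]
          have h1 := Nat.div_add_mod t m
          have h2 := Nat.mod_lt t hm0
          omega
        have hcard : ((Finset.range T).filter (fun t => s ∈ Finset.Icc (m*(t/m)) t)).card
            ≤ m := by
          have := Finset.card_le_card hsubset
          rwa [Nat.card_Ico, Nat.add_sub_cancel_left] at this
        have : (((Finset.range T).filter (fun t => s ∈ Finset.Icc (m*(t/m)) t)).card : ℝ)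
            ≤ (m : ℝ) := by exact_mod_cast hcard
        nlinarith [sq_nonneg (‖w s - z s‖)]
      calc ∑ s ∈ Finset.range T, (∑ t ∈ Finset.range T,
              if s ∈ Finset.Icc (m*(t/m)) t then ‖w s - z s‖^2 else 0)
          ≤ ∑ s ∈ Finset.range T, (m : ℝ) * ‖w s - z s‖^2 := Finset.sum_le_sum hin
        _ = m * ∑ s ∈ Finset.range T, ‖w s - z s‖^2 := by rw [Finset.mul_sum]
    have h1 := Finset.sum_le_sum (s := Finset.range T) (fun t _ => hper t)
    have h2 : ∑ t ∈ Finset.range T, (16/9) * (L/M)^2 * m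
          * ∑ s ∈ Finset.Icc (m*(t/m)) t, ‖w s - z s‖^2
        = (16/9) * (L/M)^2 * m * ∑ t ∈ Finset.range T,
            ∑ s ∈ Finset.Icc (m*(t/m)) t, ‖w s - z s‖^2 := by
      rw [Finset.mul_sum]
    have h3 : (16/9) * (L/M)^2 * m * (m * ∑ s ∈ Finset.range T, ‖w s - z s‖^2)
        ≤ (1/9) * ∑ s ∈ Finset.range T, ‖w s - z s‖^2 := by
      have hsqnn : (0:ℝ) ≤ ∑ s ∈ Finset.range T, ‖w s - z s‖^2 :=
        Finset.sum_nonneg fun s _ => sq_nonneg _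
      have hαm2 : ((L/M) * m)^2 ≤ (1/4)^2 := by
        have h0 : (0:ℝ) ≤ (L/M) * m := mul_nonneg hα (Nat.cast_nonneg m)
        nlinarith
      nlinarith [hαm2, hsqnn]
    have hmnn : (0:ℝ) ≤ (16/9) * (L/M)^2 * m := by positivity
    calc ∑ t ∈ Finset.range T, ((L/M) * (‖z t - z (m*(t/m))‖ + ‖w t - z t‖))^2
        ≤ ∑ t ∈ Finset.range T, (16/9) * (L/M)^2 * m
            * ∑ s ∈ Finset.Icc (m*(t/m)) t, ‖w s - z s‖^2 := h1
      _ = (16/9) * (L/M)^2 * m * ∑ t ∈ Finset.range T,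
            ∑ s ∈ Finset.Icc (m*(t/m)) t, ‖w s - z s‖^2 := h2
      _ ≤ (16/9) * (L/M)^2 * m * (m * ∑ s ∈ Finset.range T, ‖w s - z s‖^2) :=
          mul_le_mul_of_nonneg_left hswap hmnn
      _ ≤ (1/9) * ∑ t ∈ Finset.range T, ‖w t - z t‖^2 := h3

  -- summed inequality
  have hsumstep : ∀ v : WithLp 2 (X × Y), 2 * ∑ t ∈ Finset.range T, η t * ⟪F (w t), w t - v⟫
      ≤ ‖z 0 - v‖^2 - ‖z T - v‖^2 - (8/9) * ∑ t ∈ Finset.range T, ‖w t - z t‖^2 := by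
    intro v
    have h1 : ∑ t ∈ Finset.range T, 2 * (η t * ⟪F (w t), w t - v⟫)
        ≤ ∑ t ∈ Finset.range T, (‖z t - v‖^2 - ‖z (t+1) - v‖^2 - ‖w t - z t‖^2
          + ((L/M) * (‖z t - z (m*(t/m))‖ + ‖w t - z t‖))^2) :=
      Finset.sum_le_sum (fun t _ => step v t)
    have h2 : ∑ t ∈ Finset.range T, (‖z t - v‖^2 - ‖z (t+1) - v‖^2 - ‖w t - z t‖^2
          + ((L/M) * (‖z t - z (m*(t/m))‖ + ‖w t - z t‖))^2)
        = (∑ t ∈ Finset.range T, (‖z t - v‖^2 - ‖z (t+1) - v‖^2))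
          - (∑ t ∈ Finset.range T, ‖w t - z t‖^2)
          + ∑ t ∈ Finset.range T, ((L/M) * (‖z t - z (m*(t/m))‖ + ‖w t - z t‖))^2 := by
      rw [Finset.sum_add_distrib, Finset.sum_sub_distrib]
    have h3 : ∑ t ∈ Finset.range T, (‖z t - v‖^2 - ‖z (t+1) - v‖^2)
        = ‖z 0 - v‖^2 - ‖z T - v‖^2 :=
      Finset.sum_range_sub' (fun t => ‖z t - v‖^2) T
    have h4 : 2 * ∑ t ∈ Finset.range T, η t * ⟪F (w t), w t - v⟫
        = ∑ t ∈ Finset.range T, 2 * (η t * ⟪F (w t), w t - v⟫) := by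
      rw [Finset.mul_sum]
    rw [h4]
    rw [h2, h3] at h1
    linarith [haggr]
  have hsqnnT : (0:ℝ) ≤ ∑ t ∈ Finset.range T, ‖w t - z t‖^2 :=
    Finset.sum_nonneg fun s _ => sq_nonneg _
  -- bound on sum of squares
  have hsumsq : ∑ t ∈ Finset.range T, ‖w t - z t‖^2 ≤ (9/8) * R^2 := by
    have h1 := hsumstep zstar
    have h2 : (0:ℝ) ≤ ∑ t ∈ Finset.range T, η t * ⟪F (w t), w t - zstar⟫ := by
      apply Finset.sum_nonneg
      intro t _
      apply mul_nonneg (hηpos t).le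
      have := mono (w t) zstar
      rwa [hstar, sub_zero] at this
    have h3 : ‖z 0 - zstar‖^2 = R^2 := by rw [hR]
    nlinarith [sq_nonneg (‖z T - zstar‖)]
  have hRpos : 0 < R := by
    have h0 : (0:ℝ) < ‖w 0 - z 0‖^2 := pow_pos (hr 0) 2
    have h1 : ‖w 0 - z 0‖^2 ≤ ∑ t ∈ Finset.range T, ‖w t - z t‖^2 :=
      Finset.single_le_sum (f := fun t => ‖w t - z t‖^2) (fun t _ => sq_nonneg _) (Finset.mem_range.mpr (Nat.lt_of_lt_of_le Nat.zero_lt_one hT))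
    have h2 : (0:ℝ) ≤ R := hR ▸ norm_nonneg _
    nlinarith
  -- lower bound on sum of stepsizes
  set b : ℝ := Real.sqrt (9*R^2/(8*T)) with hb
  have hTpos : (0:ℝ) < T := by exact_mod_cast Nat.lt_of_lt_of_le Nat.zero_lt_one hT
  have hbpos : 0 < b := Real.sqrt_pos.mpr (by positivity)
  have hb2 : b^2 = 9*R^2/(8*T) := Real.sq_sqrt (by positivity)
  set S : ℝ := ∑ t ∈ Finset.range T, η t with hS
  have hSpos : 0 < S :=
    Finset.sum_pos (fun t _ => hηpos t) (Finset.nonempty_range_iff.mpr (by omega))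
  have hSlow : (T:ℝ) / (M * b) ≤ S := by
    have hper : ∀ t ∈ Finset.range T,
        (1/M) * (3/(2*b) - ‖w t - z t‖^2/(2*b^3)) ≤ η t := by
      intro t _
      rw [hηr t, show (1:ℝ)/(M * ‖w t - z t‖) = (1/M) * (1/‖w t - z t‖) by
        rw [one_div, one_div, one_div, mul_inv]]
      exact mul_le_mul_of_nonneg_left (inv_lower (hr t) hbpos) (by positivity)
    have h1 : ∑ t ∈ Finset.range T, (1/M) * (3/(2*b) - ‖w t - z t‖^2/(2*b^3)) ≤ S :=
      Finset.sum_le_sum hper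
    have h2 : ∑ t ∈ Finset.range T, (1/M) * (3/(2*b) - ‖w t - z t‖^2/(2*b^3))
        = (1/M) * ((T:ℝ) * (3/(2*b)) - (∑ t ∈ Finset.range T, ‖w t - z t‖^2)/(2*b^3)) := by
      rw [← Finset.mul_sum, Finset.sum_sub_distrib, Finset.sum_const, Finset.card_range,
        nsmul_eq_mul, ← Finset.sum_div]
    have h3 : (∑ t ∈ Finset.range T, ‖w t - z t‖^2)/(2*b^3) ≤ ((T:ℝ)*b^2)/(2*b^3) := by
      apply div_le_div_of_nonneg_right _ (by positivity)
      · calc (∑ t ∈ Finset.range T, ‖w t - z t‖^2) ≤ (9/8)*R^2 := hsumsq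
          _ = (T:ℝ)*b^2 := by rw [hb2]; field_simp
    have h4 : ((T:ℝ)*b^2)/(2*b^3) = (T:ℝ)/(2*b) := by
      rw [show (2:ℝ)*b^3 = (2*b)*b^2 by ring, div_mul_eq_div_div_swap]
      rw [mul_div_assoc, div_self (by positivity : b^2 ≠ 0), mul_one]
    have h5 : (T:ℝ)/(M*b) ≤ (1/M) * ((T:ℝ) * (3/(2*b)) - (T:ℝ)/(2*b)) := by
      have he1 : (T:ℝ) * (3/(2*b)) - (T:ℝ)/(2*b) = (T:ℝ)/b := by
        rw [eq_div_iff (by positivity : b ≠ 0)]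
        field_simp
        ring
      have he2 : (1/M) * ((T:ℝ)/b) = (T:ℝ)/(M*b) := by
        rw [div_mul_div_comm, one_mul]
      rw [he1, he2]
    calc (T:ℝ)/(M*b) ≤ (1/M) * ((T:ℝ) * (3/(2*b)) - (T:ℝ)/(2*b)) := h5
      _ ≤ (1/M) * ((T:ℝ) * (3/(2*b)) - (∑ t ∈ Finset.range T, ‖w t - z t‖^2)/(2*b^3)) := by
          apply mul_le_mul_of_nonneg_left _ (by positivity)
          rw [← h4] at *
          linarith [h3]
      _ = ∑ t ∈ Finset.range T, (1/M) * (3/(2*b) - ‖w t - z t‖^2/(2*b^3)) := h2.symm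
      _ ≤ S := h1
  -- distance from z 0 to the comparator
  have hz0u : ‖z 0 - u‖^2 ≤ (441/16) * R^2 := by
    have hzsu : ‖zstar - u‖^2 ≤ 18*R^2 := by
      have hsq : ‖zstar - u‖^2 = ‖q1 zstar - x‖^2 + ‖q2 zstar - y‖^2 :=
        WithLp.prod_norm_sq_eq_of_L2 (zstar - u)
      rw [hsq, norm_sub_rev (q1 zstar) x, norm_sub_rev (q2 zstar) y]
      have h1 : ‖x - q1 zstar‖^2 ≤ (3*R)^2 :=
        pow_le_pow_left₀ (norm_nonneg _) hx 2
      have h2 : ‖y - q2 zstar‖^2 ≤ (3*R)^2 :=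
        pow_le_pow_left₀ (norm_nonneg _) hy 2
      nlinarith
    have htri : ‖z 0 - u‖ ≤ R + ‖zstar - u‖ := by
      have he : z 0 - u = (z 0 - zstar) + (zstar - u) := by abel
      rw [he, hR]
      exact norm_add_le _ _
    nlinarith [norm_nonneg (zstar - u), norm_nonneg (z 0 - u), hRpos,
      sq_nonneg (‖zstar - u‖ - (17/4)*R)]
  -- Jensen + gap chaining
  have hcmR : ∀ g : ℕ → ℝ, (Finset.range T).centerMass η g
      = S⁻¹ * ∑ t ∈ Finset.range T, η t * g t := by
    intro g
    rw [Finset.centerMass, hS]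
    simp [smul_eq_mul]
  have hgap : f (q1 zout) y - f x (q2 zout) ≤ S⁻¹ * ((441/32) * R^2) := by
    let P1 : WithLp 2 (X × Y) →ₗ[ℝ] X :=
      (LinearMap.fst ℝ X Y).comp (WithLp.linearEquiv 2 ℝ (X × Y)).toLinearMap
    let P2 : WithLp 2 (X × Y) →ₗ[ℝ] Y :=
      (LinearMap.snd ℝ X Y).comp (WithLp.linearEquiv 2 ℝ (X × Y)).toLinearMap
    have hcm1 : q1 zout = (Finset.range T).centerMass η (fun t => q1 (w t)) := by
      show P1 zout = _
      rw [hzout, map_smul, map_sum]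
      simp only [map_smul]
      rw [Finset.centerMass, hS]
      rfl
    have hcm2 : q2 zout = (Finset.range T).centerMass η (fun t => q2 (w t)) := by
      show P2 zout = _
      rw [hzout, map_smul, map_sum]
      simp only [map_smul]
      rw [Finset.centerMass, hS]
      rfl
    have hJ1 := (hconv y).map_centerMass_le (t := Finset.range T) (w := η)
      (p := fun t => q1 (w t)) (fun i _ => (hηpos i).le) (hS ▸ hSpos) (fun i _ => Set.mem_univ _)
    have hJ2 := (hconc x).le_map_centerMass (t := Finset.range T) (w := η)
      (p := fun t => q2 (w t)) (fun i _ => (hηpos i).le) (hS ▸ hSpos) (fun i _ => Set.mem_univ _)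
    rw [hcmR] at hJ1 hJ2
    rw [hcm1, hcm2]
    have hlast : ∑ t ∈ Finset.range T, η t * ⟪F (w t), w t - u⟫ ≤ (441/32)*R^2 := by
      have h1 := hsumstep u
      have h2 := sq_nonneg (‖z T - u‖)
      linarith [hz0u, hsqnnT]
    have hmid : ∑ t ∈ Finset.range T, η t * (f (q1 (w t)) y - f x (q2 (w t)))
        ≤ ∑ t ∈ Finset.range T, η t * ⟪F (w t), w t - u⟫ :=
      Finset.sum_le_sum fun t _ => mul_le_mul_of_nonneg_left (gapterm t) (hηpos t).le
    have hsplit : ∑ t ∈ Finset.range T, η t * (f (q1 (w t)) y - f x (q2 (w t)))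
        = (∑ t ∈ Finset.range T, η t * f (q1 (w t)) y)
          - ∑ t ∈ Finset.range T, η t * f x (q2 (w t)) := by
      rw [← Finset.sum_sub_distrib]
      exact Finset.sum_congr rfl fun t _ => by ring
    have hSinv : (0:ℝ) ≤ S⁻¹ := inv_nonneg.mpr hSpos.le
    calc f ((Finset.range T).centerMass η (fun t => q1 (w t))) y
          - f x ((Finset.range T).centerMass η (fun t => q2 (w t)))
        ≤ (S⁻¹ * ∑ t ∈ Finset.range T, η t * f (q1 (w t)) y)
          - S⁻¹ * ∑ t ∈ Finset.range T, η t * f x (q2 (w t)) := by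
          have := hJ1
          have := hJ2
          simp only [Function.comp] at hJ1 hJ2
          linarith [hJ1, hJ2]
      _ = S⁻¹ * ∑ t ∈ Finset.range T, η t * (f (q1 (w t)) y - f x (q2 (w t))) := by
          rw [hsplit, mul_sub]
      _ ≤ S⁻¹ * ∑ t ∈ Finset.range T, η t * ⟪F (w t), w t - u⟫ :=
          mul_le_mul_of_nonneg_left hmid hSinv
      _ ≤ S⁻¹ * ((441/32)*R^2) := mul_le_mul_of_nonneg_left hlast hSinv
  -- final arithmetic
  have hfin1 : S⁻¹ ≤ M*b/(T:ℝ) := by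
    have h1 : (0:ℝ) < (T:ℝ)/(M*b) := by positivity
    have h2 : ((T:ℝ)/(M*b))⁻¹ = M*b/(T:ℝ) := inv_div _ _
    calc S⁻¹ ≤ ((T:ℝ)/(M*b))⁻¹ := inv_anti₀ h1 hSlow
      _ = M*b/(T:ℝ) := h2
  set st := Real.sqrt (T:ℝ) with hst
  have hstpos : 0 < st := Real.sqrt_pos.mpr hTpos
  have hst2 : st^2 = (T:ℝ) := Real.sq_sqrt hTpos.le
  have hT32 : (T:ℝ)^((3:ℝ)/2) = (T:ℝ) * st := by
    rw [show (3:ℝ)/2 = 1 + 1/2 by norm_num, Real.rpow_add hTpos, Real.rpow_one, hst,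
      Real.sqrt_eq_rpow]
  have hbst : b * st ≤ (15/14) * R := by
    have hc : ((15/14)*R/st)^2 = (225/196)*R^2/(T:ℝ) := by
      rw [div_pow, mul_pow, hst2]
      norm_num
    have hle : 9*R^2/(8*(T:ℝ)) ≤ ((15/14)*R/st)^2 := by
      rw [hc, div_le_div_iff₀ (by positivity) (by positivity)]
      nlinarith [sq_nonneg R, hTpos]
    have hble : b ≤ (15/14)*R/st := by
      rw [hb]
      calc Real.sqrt (9*R^2/(8*(T:ℝ))) ≤ Real.sqrt (((15/14)*R/st)^2) :=
            Real.sqrt_le_sqrt hle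
        _ = (15/14)*R/st := Real.sqrt_sq (by positivity)
    calc b * st ≤ ((15/14)*R/st) * st := mul_le_mul_of_nonneg_right hble hstpos.le
      _ = (15/14)*R := by field_simp
  have hgap2 : f (q1 zout) y - f x (q2 zout) ≤ (M*b/(T:ℝ)) * ((441/32)*R^2) :=
    le_trans hgap (mul_le_mul_of_nonneg_right hfin1 (by positivity))
  have hfinal : (M*b/(T:ℝ)) * ((441/32)*R^2) ≤ 32*M*R^3/((T:ℝ)*st) := by
    rw [div_mul_eq_mul_div, div_le_div_iff₀ hTpos (by positivity)]
    have h1 : M*b*((441/32)*R^2)*((T:ℝ)*st) = ((441/32)*M*R^2*(T:ℝ))*(b*st) := by ring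
    have hnn : (0:ℝ) ≤ (441/32)*M*R^2*(T:ℝ) := by
      apply mul_nonneg _ hTpos.le
      apply mul_nonneg (mul_nonneg (by norm_num) hMpos.le) (sq_nonneg R)
    have h2 : ((441/32)*M*R^2*(T:ℝ))*(b*st) ≤ ((441/32)*M*R^2*(T:ℝ))*((15/14)*R) :=
      mul_le_mul_of_nonneg_left hbst hnn
    have h3 : (0:ℝ) < M*R^3*(T:ℝ) := by positivity
    nlinarith [h2, h3]
  rw [hT32]
  exact le_trans hgap2 hfinal
end

section
/- Let f : E → ℝ be convex and differentiable, fix z̄ ∈ E, γ > 0, and let g(w) := f(w) + (γ/3)‖w − z̄‖³ with gradient ∇g. Let ẑ be a global minimizer of g, let σ > 0, and set c := σ/(2(1 + 2σ)). If a point z ∈ E satisfies ‖∇g(z)‖ ≤ c·γ·‖z̄ − ẑ‖², then ‖∇g(z)‖ ≤ σ·γ·‖z − z̄‖²; consequently, if z ≠ z̄ then the pair (z, λ) with λ := γ‖z − z̄‖ satisfies the MS-oracle conditions ‖z − (z̄ − (1/λ)∇f(z))‖ ≤ σ‖z − z̄‖ and ‖z − z̄‖ ≥ λ/γ. -/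
open scoped RealInnerProductSpace

lemma cube_deriv {t : ℝ} (ht : 0 ≤ t) :
    HasDerivAt (fun s : ℝ => s * Real.sqrt s) (3 / 2 * Real.sqrt t) t := by
  rcases eq_or_lt_of_le ht with h | h
  · subst h
    rw [hasDerivAt_iff_tendsto_slope]
    have hsl : ∀ s : ℝ, slope (fun s : ℝ => s * Real.sqrt s) 0 s = Real.sqrt s := by
      intro s
      rcases eq_or_ne s 0 with rfl | hs
      · simp [slope]
      · simp [slope_def_field, hs]
    have h2 : Filter.Tendsto Real.sqrt (nhdsWithin 0 {(0:ℝ)}ᶜ) (nhds (3/2 * Real.sqrt 0)) := by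
      simpa using (Real.continuous_sqrt.tendsto 0).mono_left nhdsWithin_le_nhds
    exact h2.congr fun s => (hsl s).symm
  · have h1 : HasDerivAt Real.sqrt (1 / (2 * Real.sqrt t)) t := Real.hasDerivAt_sqrt h.ne'
    have h2 := (hasDerivAt_id t).mul h1
    convert h2 using 1
    · rfl
    · rfl
    · rfl
    have hs : Real.sqrt t > 0 := Real.sqrt_pos.2 h
    show 3 / 2 * Real.sqrt t = 1 * Real.sqrt t + t * (1 / (2 * Real.sqrt t))
    field_simp
    nlinarith [Real.sq_sqrt ht, Real.sqrt_nonneg t]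

lemma cube_grad {E : Type*} [NormedAddCommGroup E] [InnerProductSpace ℝ E] [CompleteSpace E]
    (zbar x : E) :
    HasGradientAt (fun w => ‖w - zbar‖ ^ 3) ((3 * ‖x - zbar‖) • (x - zbar)) x := by
  have hL : HasFDerivAt (fun w : E => ‖w - zbar‖ ^ 2)
      (2 • (innerSL ℝ (x - zbar)).comp (ContinuousLinearMap.id ℝ E)) x := by
    simpa using ((hasFDerivAt_id x).sub_const zbar).norm_sq
  have hψ : HasDerivAt (fun s : ℝ => s * Real.sqrt s) (3 / 2 * ‖x - zbar‖) (‖x - zbar‖ ^ 2) := by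
    have := cube_deriv (t := ‖x - zbar‖ ^ 2) (by positivity)
    simpa [Real.sqrt_sq (norm_nonneg _)] using this
  have hcomp := hψ.comp_hasFDerivAt x hL
  rw [hasGradientAt_iff_hasFDerivAt]
  convert hcomp using 1
  · rfl
  · funext w
    simp only [Function.comp]
    rw [Real.sqrt_sq (norm_nonneg _)]
    ring
  · ext y
    simp [InnerProductSpace.toDual_apply_apply, real_inner_smul_left]
    ring

/-- subgradient inequality for a convex differentiable function -/
lemma subgrad_ineq {E : Type*} [NormedAddCommGroup E] [InnerProductSpace ℝ E] [CompleteSpace E]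
    (f : E → ℝ) (hconv : ConvexOn ℝ Set.univ f) (a b : E) (v : E)
    (hv : HasGradientAt f v a) : ⟪v, b - a⟫ ≤ f b - f a := by
  set φ : ℝ → ℝ := fun t => f (a + t • (b - a)) with hφ
  have hl : HasDerivAt (fun t : ℝ => a + t • (b - a)) (b - a) 0 := by
    simpa using ((hasDerivAt_id (0:ℝ)).smul_const (b - a)).const_add a
  have hF : HasFDerivAt f (InnerProductSpace.toDual ℝ E v) a := by
    rwa [hasGradientAt_iff_hasFDerivAt] at hv
  have hF' : HasFDerivAt f (InnerProductSpace.toDual ℝ E v)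
      ((fun t : ℝ => a + t • (b - a)) 0) := by simpa using hF
  have hd : HasDerivAt φ ⟪v, b - a⟫ 0 := by
    have := hF'.comp_hasDerivAt 0 hl
    simp [hφ, InnerProductSpace.toDual_apply_apply] at this
    exact this
  have hφconv : ConvexOn ℝ Set.univ φ := by
    have := hconv.comp_affineMap (AffineMap.lineMap a b : ℝ →ᵃ[ℝ] E)
    have heq : φ = f ∘ (AffineMap.lineMap a b : ℝ →ᵃ[ℝ] E) := by
      funext t
      simp [hφ, AffineMap.lineMap_apply, add_comm]
    rw [heq]
    simpa using this
  have hslope := hφconv.le_slope_of_hasDerivWithinAt_Ioi (Set.mem_univ 0) (Set.mem_univ 1)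
    one_pos (hd.hasDerivWithinAt)
  have e1 : φ 1 = f b := by
    show f (a + (1:ℝ) • (b - a)) = f b
    rw [one_smul]; congr 1; abel
  have e0 : φ 0 = f a := by
    show f (a + (0:ℝ) • (b - a)) = f a
    rw [zero_smul, add_zero]
  have hs : slope φ 0 1 = f b - f a := by
    rw [slope_def_field, e1, e0]; norm_num
  rw [hs] at hslope
  exact hslope

/-- key monotonicity inequality for `w ↦ ‖w‖ • w` -/
lemma key_ineq {E : Type*} [NormedAddCommGroup E] [InnerProductSpace ℝ E] (a b : E) :
    (‖a‖ + ‖b‖) / 2 * ‖a - b‖ ^ 2 ≤ ⟪‖a‖ • a - ‖b‖ • b, a - b⟫ := by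
  have h1 : ‖a - b‖ ^ 2 = ‖a‖ ^ 2 - 2 * ⟪a, b⟫ + ‖b‖ ^ 2 := by
    rw [@norm_sub_sq_real]
  have h2 : ⟪‖a‖ • a - ‖b‖ • b, a - b⟫
      = ‖a‖ ^ 3 + ‖b‖ ^ 3 - (‖a‖ + ‖b‖) * ⟪a, b⟫ := by
    simp only [inner_sub_left, inner_sub_right, real_inner_smul_left,
      real_inner_self_eq_norm_sq]
    rw [real_inner_comm b a]
    ring
  rw [h1, h2]
  nlinarith [sq_nonneg (‖a‖ - ‖b‖), norm_nonneg a, norm_nonneg b]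

/-- Lemma (approximate minimization of the cubic-regularized proximal function
implements an MS oracle): if `‖∇g(z)‖ ≤ c γ ‖z̄ − ẑ‖²` with
`c = σ/(2(1+2σ))`, then `‖∇g(z)‖ ≤ σ γ ‖z − z̄‖²`, and consequently `(z, γ‖z − z̄‖)`
satisfies the MS-oracle conditions. -/
theorem approx_min_implements_ms_oracle
    {E : Type*} [NormedAddCommGroup E] [InnerProductSpace ℝ E] [FiniteDimensional ℝ E]
    (f : E → ℝ) (hconv : ConvexOn ℝ Set.univ f)
    (f' : E → E) (hgrad : ∀ x : E, HasGradientAt f (f' x) x)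
    (zbar : E) (γ : ℝ) (hγ : 0 < γ)
    (g : E → ℝ) (hg : ∀ x : E, g x = f x + γ / 3 * ‖x - zbar‖ ^ 3)
    (g' : E → E) (hg' : ∀ x : E, HasGradientAt g (g' x) x)
    (zhat : E) (hmin : ∀ x : E, g zhat ≤ g x)
    (σ : ℝ) (hσ : 0 < σ) (c : ℝ) (hc : c = σ / (2 * (1 + 2 * σ)))
    (z : E) (hz : ‖g' z‖ ≤ c * γ * ‖zbar - zhat‖ ^ 2) :
    ‖g' z‖ ≤ σ * γ * ‖z - zbar‖ ^ 2 ∧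
      (z ≠ zbar →
        ‖z - (zbar - (1 / (γ * ‖z - zbar‖)) • f' z)‖ ≤ σ * ‖z - zbar‖ ∧
          γ * ‖z - zbar‖ / γ ≤ ‖z - zbar‖) := by
  -- identify the gradient of g
  have hgid : ∀ x : E, g' x = f' x + (γ * ‖x - zbar‖) • (x - zbar) := by
    intro x
    refine (hg' x).unique ?_
    have hcube := cube_grad zbar x
    rw [hasGradientAt_iff_hasFDerivAt] at hcube ⊢
    have hfx := hgrad x
    rw [hasGradientAt_iff_hasFDerivAt] at hfx
    have hsum := hfx.add (hcube.const_smul (γ / 3))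
    have hfun : g = fun w => f w + (γ / 3) • ‖w - zbar‖ ^ 3 := by
      funext w; rw [hg w]; simp [smul_eq_mul]
    rw [hfun]
    convert hsum using 1
    · rfl
    · rfl
    · rfl
    rw [← map_smul, ← map_add]
    congr 1
    have hsc : γ / 3 * (3 * ‖x - zbar‖) = γ * ‖x - zbar‖ := by ring
    rw [smul_smul, hsc]
  -- gradient vanishes at the global minimizer
  have hzero : g' zhat = 0 := by
    have hloc : IsLocalMin g zhat := Filter.Eventually.of_forall hmin
    have hF := hg' zhat
    rw [hasGradientAt_iff_hasFDerivAt] at hF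
    have h0 := hloc.hasFDerivAt_eq_zero hF
    have h1 : InnerProductSpace.toDual ℝ E (g' zhat) = InnerProductSpace.toDual ℝ E 0 := by
      rw [h0]; simp
    exact (InnerProductSpace.toDual ℝ E).injective h1
  set a : E := z - zbar with ha
  set b : E := zhat - zbar with hb
  set r : ℝ := ‖a‖ with hr
  set R : ℝ := ‖b‖ with hR
  have hRrev : ‖zbar - zhat‖ = R := by rw [hR, hb, norm_sub_rev]
  have hgz : g' z = f' z + (γ * r) • a := hgid z
  have hfzhat : f' zhat = -((γ * R) • b) := by
    have := hgid zhat
    rw [hzero] at this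
    have : f' zhat + (γ * R) • b = 0 := by rw [this]
    linear_combination (norm := module) this
  -- monotonicity of ∇f
  have hmono : (0:ℝ) ≤ ⟪f' z - f' zhat, z - zhat⟫ := by
    have h1 := subgrad_ineq f hconv z zhat (f' z) (hgrad z)
    have h2 := subgrad_ineq f hconv zhat z (f' zhat) (hgrad zhat)
    have h3 : ⟪f' z, zhat - z⟫ = - ⟪f' z, z - zhat⟫ := by
      rw [← inner_neg_right]; congr 1; abel
    rw [inner_sub_left]
    rw [h3] at h1
    linarith
  -- the key inequality
  have hzzhat : z - zhat = a - b := by rw [ha, hb]; abel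
  have hkey : γ * ((r + R) / 2 * ‖a - b‖ ^ 2) ≤ ⟪g' z, a - b⟫ := by
    have hk := key_ineq a b
    have hdecomp : ⟪g' z, a - b⟫
        = ⟪f' z - f' zhat, z - zhat⟫ + γ * ⟪r • a - R • b, a - b⟫ := by
      rw [hgz, hfzhat, hzzhat]
      simp only [inner_add_left, inner_sub_left, inner_neg_left, real_inner_smul_left]
      ring
    have : γ * ((r + R) / 2 * ‖a - b‖ ^ 2) ≤ γ * ⟪r • a - R • b, a - b⟫ := by
      apply mul_le_mul_of_nonneg_left _ hγ.le
      simpa [hr, hR] using hk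
    linarith [hdecomp, this]
  have hCS : ⟪g' z, a - b⟫ ≤ ‖g' z‖ * ‖a - b‖ := real_inner_le_norm _ _
  set N : ℝ := ‖g' z‖ with hN
  set d : ℝ := ‖a - b‖ with hd
  have hdnn : 0 ≤ d := hd ▸ norm_nonneg _
  have hrnn : 0 ≤ r := hr ▸ norm_nonneg _
  have hRnn : 0 ≤ R := hR ▸ norm_nonneg _
  have hNnn : 0 ≤ N := hN ▸ norm_nonneg _
  clear_value a b r R N d
  have hdge : R - r ≤ d := by
    rw [hd, hR, hr]
    calc ‖b‖ - ‖a‖ ≤ ‖b - a‖ := norm_sub_norm_le _ _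
    _ = ‖a - b‖ := norm_sub_rev _ _
  have hzN : N ≤ c * γ * R ^ 2 := by rwa [hRrev] at hz
  have hmain : γ * ((r + R) / 2 * d ^ 2) ≤ N * d := le_trans hkey hCS
  have hcpos : 0 < c := by rw [hc]; positivity
  have h2c : 2 * c < 1 := by
    rw [hc, mul_comm, div_mul_eq_mul_div, div_lt_one (by positivity)]
    nlinarith
  -- (1 - 2c) R² ≤ r²
  have hRr : (1 - 2 * c) * R ^ 2 ≤ r ^ 2 := by
    by_cases hrR : R ≤ r
    · nlinarith only [hrR, hRnn, hcpos, mul_self_le_mul_self hRnn hrR, mul_nonneg hcpos.le (sq_nonneg R)]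
    · push_neg at hrR
      have hdpos : 0 < d := lt_of_lt_of_le (by linarith) hdge
      have hstep : γ * ((r + R) / 2) * d ≤ N := by
        have := hmain
        rw [pow_two] at this
        have h' : γ * ((r + R) / 2) * d * d ≤ N * d := by linarith only [this]
        exact le_of_mul_le_mul_right h' hdpos
      have hstep2 : γ * ((r + R) / 2) * (R - r) ≤ c * γ * R ^ 2 := by
        calc γ * ((r + R) / 2) * (R - r) ≤ γ * ((r + R) / 2) * d := by
              apply mul_le_mul_of_nonneg_left hdge
              have : (0:ℝ) ≤ (r + R) / 2 := by linarith
              exact mul_nonneg hγ.le this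
        _ ≤ N := hstep
        _ ≤ c * γ * R ^ 2 := hzN
      have h4 : γ * ((r + R) / 2 * (R - r)) ≤ γ * (c * R ^ 2) := by
        calc γ * ((r + R) / 2 * (R - r)) = γ * ((r + R) / 2) * (R - r) := by ring
        _ ≤ c * γ * R ^ 2 := hstep2
        _ = γ * (c * R ^ 2) := by ring
      have h3 := le_of_mul_le_mul_left h4 hγ
      linarith only [h3]
  have hfirst : N ≤ σ * γ * r ^ 2 := by
    have hcsig : c ≤ σ * (1 - 2 * c) := by
      have h5 : (0:ℝ) < 1 + 2 * σ := by linarith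
      have e : σ * (1 - 2 * c) = σ * (1 + σ) / (1 + 2 * σ) := by
        rw [hc]; field_simp; ring
      rw [e, hc, div_le_div_iff₀ (by positivity) h5]
      nlinarith [mul_nonneg hσ.le (sq_nonneg (1 + 2 * σ))]
    have hm1 := mul_le_mul_of_nonneg_right hcsig (by positivity : (0:ℝ) ≤ γ * R ^ 2)
    have hm2 := mul_le_mul_of_nonneg_left hRr (by positivity : (0:ℝ) ≤ σ * γ)
    calc N ≤ c * γ * R ^ 2 := hzN
    _ ≤ σ * (1 - 2 * c) * (γ * R ^ 2) := by linarith [hm1]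
    _ = σ * γ * ((1 - 2 * c) * R ^ 2) := by ring
    _ ≤ σ * γ * r ^ 2 := by linarith [hm2]
  refine ⟨hfirst, fun hne => ?_⟩
  have hrpos : 0 < r := by
    rw [hr, ha, norm_pos_iff]
    exact sub_ne_zero.mpr hne
  have hlampos : 0 < γ * r := by positivity
  have heq : z - (zbar - (1 / (γ * r)) • f' z) = (1 / (γ * r)) • g' z := by
    rw [hgz, smul_add, smul_smul]
    rw [one_div, inv_mul_cancel₀ hlampos.ne', one_smul]
    rw [ha]
    abel
  constructor
  · rw [heq, norm_smul]
    rw [Real.norm_eq_abs, abs_of_pos (by positivity : (0:ℝ) < 1 / (γ * r))]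
    rw [one_div, inv_mul_le_iff₀ hlampos]
    calc ‖g' z‖ = N := hN.symm
    _ ≤ σ * γ * r ^ 2 := hfirst
    _ = γ * r * (σ * r) := by ring
  · exact (mul_div_cancel_left₀ r hγ.ne').le
end

section
/- Let E be a finite-dimensional real inner product space, let F : E → E be differentiable with derivative F' that is L-Lipschitz in operator norm, and let M > 0. Suppose points z_π, z, w ∈ E with w ≠ z satisfy F(z) + F'(z_π)(w − z) + M‖w − z‖·(w − z) = 0, set η := 1/(M‖z − w‖), and let z⁺ := z − η·F(w). Then ‖w − z⁺‖ ≤ (L/(2M))‖w − z‖ + (L/M)‖z_π − z‖. -/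
open scoped RealInnerProductSpace

/-- Taylor-type bound with a lazy anchor point. -/
theorem lazy_taylor_bound
    {E : Type*} [NormedAddCommGroup E] [InnerProductSpace ℝ E] [FiniteDimensional ℝ E]
    (F : E → E) (F' : E → E →L[ℝ] E) (L : ℝ) (hL : 0 ≤ L)
    (hdiff : ∀ x : E, HasFDerivAt F (F' x) x)
    (hLip : ∀ x y : E, ‖F' x - F' y‖ ≤ L * ‖x - y‖)
    (zpi z w : E) :
    ‖F w - F z - F' zpi (w - z)‖ ≤ L / 2 * ‖w - z‖ ^ 2 + L * ‖z - zpi‖ * ‖w - z‖ := by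
  -- continuity of F'
  have hF'cont : Continuous F' := by
    refine (LipschitzWith.of_dist_le_mul (K := ⟨L, hL⟩) ?_).continuous
    intro x y
    simp only [dist_eq_norm]; exact hLip x y
  have hgderiv : ∀ t : ℝ, HasDerivAt (fun s : ℝ => F (z + s • (w - z)))
      (F' (z + t • (w - z)) (w - z)) t := by
    intro t
    have h1 : HasDerivAt (fun s : ℝ => z + s • (w - z)) (w - z) t := by
      simpa using ((hasDerivAt_id t).smul_const (w - z)).const_add z
    exact (hdiff (z + t • (w - z))).comp_hasDerivAt t h1
  have hcont : Continuous fun t : ℝ => F' (z + t • (w - z)) (w - z) := by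
    have : Continuous fun t : ℝ => z + t • (w - z) := by continuity
    exact (ContinuousLinearMap.apply ℝ E (w - z)).continuous.comp (hF'cont.comp this)
  have hFTC : ∫ t in (0:ℝ)..1, F' (z + t • (w - z)) (w - z) = F w - F z := by
    have := intervalIntegral.integral_eq_sub_of_hasDerivAt
      (f := fun s : ℝ => F (z + s • (w - z)))
      (f' := fun t : ℝ => F' (z + t • (w - z)) (w - z))
      (fun t _ => hgderiv t) (hcont.intervalIntegrable 0 1)
    simpa using this
  have hint : Continuous fun t : ℝ => F' (z + t • (w - z)) (w - z) - F' zpi (w - z) :=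
    hcont.sub continuous_const
  have hsplit : F w - F z - F' zpi (w - z)
      = ∫ t in (0:ℝ)..1, (F' (z + t • (w - z)) (w - z) - F' zpi (w - z)) := by
    rw [intervalIntegral.integral_sub (hcont.intervalIntegrable 0 1)
      (intervalIntegrable_const), hFTC]
    simp
  rw [hsplit]
  have hbound : ∀ t ∈ Set.Icc (0:ℝ) 1,
      ‖F' (z + t • (w - z)) (w - z) - F' zpi (w - z)‖
        ≤ L * (t * ‖w - z‖ + ‖z - zpi‖) * ‖w - z‖ := by
    intro t ht
    have h1 : ‖F' (z + t • (w - z)) (w - z) - F' zpi (w - z)‖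
        ≤ ‖F' (z + t • (w - z)) - F' zpi‖ * ‖w - z‖ := by
      have := (F' (z + t • (w - z)) - F' zpi).le_opNorm (w - z)
      simpa using this
    have h2 : ‖F' (z + t • (w - z)) - F' zpi‖ ≤ L * ‖z + t • (w - z) - zpi‖ :=
      hLip _ _
    have h3 : ‖z + t • (w - z) - zpi‖ ≤ t * ‖w - z‖ + ‖z - zpi‖ := by
      have : z + t • (w - z) - zpi = t • (w - z) + (z - zpi) := by abel
      rw [this]
      calc ‖t • (w - z) + (z - zpi)‖ ≤ ‖t • (w - z)‖ + ‖z - zpi‖ := norm_add_le _ _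
        _ = t * ‖w - z‖ + ‖z - zpi‖ := by
            rw [norm_smul, Real.norm_eq_abs, abs_of_nonneg ht.1]
    calc ‖F' (z + t • (w - z)) (w - z) - F' zpi (w - z)‖
        ≤ ‖F' (z + t • (w - z)) - F' zpi‖ * ‖w - z‖ := h1
      _ ≤ (L * ‖z + t • (w - z) - zpi‖) * ‖w - z‖ := by
          exact mul_le_mul_of_nonneg_right h2 (norm_nonneg _)
      _ ≤ L * (t * ‖w - z‖ + ‖z - zpi‖) * ‖w - z‖ := by
          exact mul_le_mul_of_nonneg_right
            (mul_le_mul_of_nonneg_left h3 hL) (norm_nonneg _)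
  have hval : (∫ t in (0:ℝ)..1, L * (t * ‖w - z‖ + ‖z - zpi‖) * ‖w - z‖)
      = L / 2 * ‖w - z‖ ^ 2 + L * ‖z - zpi‖ * ‖w - z‖ := by
    have heq : ∀ t ∈ Set.uIcc (0:ℝ) 1, L * (t * ‖w - z‖ + ‖z - zpi‖) * ‖w - z‖
        = (L * ‖w - z‖ * ‖w - z‖) * t + L * ‖z - zpi‖ * ‖w - z‖ := by
      intro t _; ring
    rw [intervalIntegral.integral_congr heq,
      intervalIntegral.integral_add
        (((by fun_prop) :
          Continuous fun t : ℝ => (L * ‖w - z‖ * ‖w - z‖) * t).intervalIntegrable 0 1)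
        intervalIntegrable_const,
      intervalIntegral.integral_const_mul, integral_id,
      intervalIntegral.integral_const]
    simp
    ring
  have hIB : ‖∫ t in (0:ℝ)..1, (F' (z + t • (w - z)) (w - z) - F' zpi (w - z))‖
      ≤ |∫ t in (0:ℝ)..1, L * (t * ‖w - z‖ + ‖z - zpi‖) * ‖w - z‖| := by
    apply intervalIntegral.norm_integral_le_abs_of_norm_le
    · filter_upwards [MeasureTheory.ae_restrict_mem measurableSet_uIoc] with t ht
      rw [Set.uIoc_of_le (zero_le_one' ℝ)] at ht
      exact hbound t ⟨le_of_lt ht.1, ht.2⟩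
    · exact Continuous.intervalIntegrable (by fun_prop) 0 1
  refine hIB.trans_eq ?_
  rw [hval, abs_of_nonneg (by positivity)]

/-- One lazy extra-Newton step: the distance between the half-step point `w` and the
extragradient point `z⁺` is bounded by the lazy-Hessian error. -/
theorem lazy_extra_newton_step_bound
    {E : Type*} [NormedAddCommGroup E] [InnerProductSpace ℝ E] [FiniteDimensional ℝ E]
    (F : E → E) (F' : E → E →L[ℝ] E) (L M : ℝ)
    (hdiff : ∀ x : E, HasFDerivAt F (F' x) x)
    (hLip : ∀ x y : E, ‖F' x - F' y‖ ≤ L * ‖x - y‖)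
    (hMpos : 0 < M)
    (zpi z w : E) (hne : w ≠ z)
    (hnewton : F z + F' zpi (w - z) + (M * ‖w - z‖) • (w - z) = 0)
    (η : ℝ) (hη : η = 1 / (M * ‖z - w‖))
    (zplus : E) (hzplus : zplus = z - η • F w) :
    ‖w - zplus‖ ≤ L / (2 * M) * ‖w - z‖ + L / M * ‖zpi - z‖ := by
  have hwz : (0:ℝ) < ‖w - z‖ := by
    rw [norm_pos_iff, sub_ne_zero]; exact hne
  have hL : 0 ≤ L := by
    nlinarith [hLip w z, norm_nonneg (F' w - F' z)]
  have hzw : ‖z - w‖ = ‖w - z‖ := norm_sub_rev z w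
  have hηM : η * (M * ‖w - z‖) = 1 := by
    rw [hη, hzw]
    field_simp
  have hηnn : 0 ≤ η := by
    rw [hη]
    positivity
  -- w - zplus = η • (F w - F z - F' zpi (w - z))
  have hkey : w - zplus = η • (F w - F z - F' zpi (w - z)) := by
    have h1 : (M * ‖w - z‖) • (w - z) = -(F z + F' zpi (w - z)) := by
      have := hnewton
      linear_combination (norm := module) this
    have h2 : w - z = η • (-(F z + F' zpi (w - z))) := by
      rw [← h1, smul_smul, hηM, one_smul]
    rw [hzplus]
    calc w - (z - η • F w) = (w - z) + η • F w := by abel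
      _ = η • (-(F z + F' zpi (w - z))) + η • F w := by rw [← h2]
      _ = η • (F w - F z - F' zpi (w - z)) := by
          rw [← smul_add]; congr 1; abel
  rw [hkey, norm_smul, Real.norm_eq_abs, abs_of_nonneg hηnn]
  have htaylor := lazy_taylor_bound F F' L hL hdiff hLip zpi z w
  calc η * ‖F w - F z - F' zpi (w - z)‖
      ≤ η * (L / 2 * ‖w - z‖ ^ 2 + L * ‖z - zpi‖ * ‖w - z‖) :=
        mul_le_mul_of_nonneg_left htaylor hηnn
    _ = (η * ‖w - z‖) * (L / 2 * ‖w - z‖ + L * ‖z - zpi‖) := by ring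
    _ = L / (2 * M) * ‖w - z‖ + L / M * ‖zpi - z‖ := by
        have hη2 : η * ‖w - z‖ = 1 / M := by
          field_simp at hηM ⊢
          nlinarith [hηM]
        rw [hη2, norm_sub_rev z zpi]
        field_simp
end

section
/- Let f : E → ℝ be convex and differentiable, fix z̄ ∈ E and γ > 0, and let g(w) := f(w) + (γ/3)‖w − z̄‖³ with gradient ∇g(w) = ∇f(w) + γ‖w − z̄‖(w − z̄). Then for all z, z' ∈ E: ⟨∇g(z) − ∇g(z'), z − z'⟩ ≥ (γ/2)‖z − z'‖³. -/
open scoped RealInnerProductSpace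

lemma grad_monotone_aux
    {E : Type*} [NormedAddCommGroup E] [InnerProductSpace ℝ E] [FiniteDimensional ℝ E]
    (f : E → ℝ) (hconv : ConvexOn ℝ Set.univ f)
    (f' : E → E) (hgrad : ∀ x : E, HasGradientAt f (f' x) x) (x y : E) :
    0 ≤ ⟪f' x - f' y, x - y⟫ := by
  set φ : ℝ → E := fun t => AffineMap.lineMap y x t with hφ
  have hφd : ∀ t : ℝ, HasDerivAt φ (x - y) t := by
    intro t
    have : HasDerivAt (fun t : ℝ => t • (x - y) + y) ((1 : ℝ) • (x - y)) t :=
      ((hasDerivAt_id t).smul_const (x - y)).add_const y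
    simpa [hφ, AffineMap.lineMap_apply, one_smul] using this
  have hcomp : ∀ t : ℝ, HasDerivAt (f ∘ φ) ⟪f' (φ t), x - y⟫ t := by
    intro t
    have := ((hgrad (φ t)).hasFDerivAt.comp_hasDerivAt t (hφd t))
    simpa [InnerProductSpace.toDual_apply_apply] using this
  have hconv' : ConvexOn ℝ Set.univ (f ∘ φ) := by
    have := hconv.comp_affineMap (AffineMap.lineMap y x : ℝ →ᵃ[ℝ] E)
    simpa [hφ] using this
  have hmono := hconv'.monotoneOn_deriv
    (fun t _ => (hcomp t).differentiableAt)
  have h01 : deriv (f ∘ φ) 0 ≤ deriv (f ∘ φ) 1 :=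
    hmono (Set.mem_univ 0) (Set.mem_univ 1) zero_le_one
  rw [(hcomp 0).deriv, (hcomp 1).deriv] at h01
  have h0 : φ 0 = y := by simp [hφ]
  have h1 : φ 1 = x := by simp [hφ]
  rw [h0, h1] at h01
  rw [inner_sub_left]
  linarith

lemma cubic_monotone_aux
    {E : Type*} [NormedAddCommGroup E] [InnerProductSpace ℝ E] (u v : E) :
    ‖u - v‖ ^ 3 / 2 ≤ ⟪‖u‖ • u - ‖v‖ • v, u - v⟫ := by
  set a := ‖u‖ with ha
  set b := ‖v‖ with hb
  set t := ⟪u, v⟫ with ht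
  set s := ‖u - v‖ with hs
  have ha0 : 0 ≤ a := norm_nonneg u
  have hb0 : 0 ≤ b := norm_nonneg v
  have hs0 : 0 ≤ s := norm_nonneg _
  have hinner : ⟪‖u‖ • u - ‖v‖ • v, u - v⟫ = a ^ 3 + b ^ 3 - (a + b) * t := by
    simp only [inner_sub_left, inner_sub_right, real_inner_smul_left,
      real_inner_self_eq_norm_sq, ← ha, ← hb, ← ht]
    have : ⟪v, u⟫ = t := by rw [real_inner_comm]
    rw [this]; ring
  have hsq : s ^ 2 = a ^ 2 + b ^ 2 - 2 * t := by
    rw [hs, ha, hb, ht, norm_sub_pow_two_real]; ring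
  have hsle : s ≤ a + b := norm_sub_le u v
  rw [hinner]
  have key : a ^ 3 + b ^ 3 - (a + b) * t = (a + b) * (s ^ 2 + (a - b) ^ 2) / 2 := by
    rw [hsq]; ring
  rw [key]
  have h1 : s ^ 3 ≤ (a + b) * s ^ 2 := by
    calc s ^ 3 = s * s ^ 2 := by ring
    _ ≤ (a + b) * s ^ 2 := by nlinarith
  nlinarith [sq_nonneg (a - b), add_nonneg ha0 hb0]

/-- Uniform convexity of the cubic-regularized function: the gradient of
`g(w) = f(w) + (γ/3)‖w − z̄‖³` satisfies
`⟪∇g(z) − ∇g(z'), z − z'⟫ ≥ (γ/2)‖z − z'‖³`. -/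
theorem cubic_regularized_uniform_monotone
    {E : Type*} [NormedAddCommGroup E] [InnerProductSpace ℝ E] [FiniteDimensional ℝ E]
    (f : E → ℝ) (hconv : ConvexOn ℝ Set.univ f)
    (f' : E → E) (hgrad : ∀ x : E, HasGradientAt f (f' x) x)
    (zbar : E) (γ : ℝ) (hγ : 0 < γ)
    (g : E → ℝ) (hg : ∀ x : E, g x = f x + γ / 3 * ‖x - zbar‖ ^ 3)
    (g' : E → E) (hg' : ∀ x : E, g' x = f' x + (γ * ‖x - zbar‖) • (x - zbar)) :
    ∀ z z' : E, γ / 2 * ‖z - z'‖ ^ 3 ≤ ⟪g' z - g' z', z - z'⟫ := by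
  intro z z'
  have huv : (z - zbar) - (z' - zbar) = z - z' := by abel
  have hdiff : g' z - g' z' = (f' z - f' z')
      + γ • (‖z - zbar‖ • (z - zbar) - ‖z' - zbar‖ • (z' - zbar)) := by
    rw [hg' z, hg' z']
    module
  rw [hdiff, inner_add_left, real_inner_smul_left]
  have h1 := grad_monotone_aux f hconv f' hgrad z z'
  have h2 := cubic_monotone_aux (z - zbar) (z' - zbar)
  rw [huv] at h2
  have h3 : γ * (‖z - z'‖ ^ 3 / 2)
      ≤ γ * ⟪‖z - zbar‖ • (z - zbar) - ‖z' - zbar‖ • (z' - zbar), z - z'⟫ :=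
    mul_le_mul_of_nonneg_left h2 hγ.le
  linarith
end
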